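/- arXiv:1309.7421 — 7 statements merged into one kernel-verified Lean document; each statement's English description precedes it below -/
import Mathlib

section
/- Weak maximum principle (Lemma 2.2): Let u be admissible and satisfy 𝓛u(x,t) ≤ 0 for every (x,t) ∈ [0,l] × (0,T]. If u attains a positive maximum over Q̄, i.e. there is a point (x₀,t₀) ∈ Q̄ with u(x₀,t₀) = max_{Q̄} u > 0, then necessarily t₀ = 0. In particular, u cannot attain a positive maximum at any interior point nor at the degenerate lateral boundaries {x = 0, 0 < t ≤ T} and {x = l, 0 < t ≤ T}. -/
/-!
Suppose the positive maximum sits at a time `t₀ > 0`. Maximality in time gives `u_t ≥ 0` there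
(the derivative is one-sided when `t₀ = T`). The diffusion term `a u_xx + a' u_x` is `≤ 0`:
at an interior point `u_x = 0` and `u_xx ≤ 0` while `a ≥ 0`; at an endpoint the degeneracy
`a = 0` leaves only `a' u_x`, and `a' u_x ≤ 0` because `a` is minimal and `u` maximal there.
Hence `𝓛u ≥ q u ≥ q₀ u > 0`, contradicting `𝓛u ≤ 0`.
-/

open Set Filter Topology

theorem IsMaxOn.hasDerivWithinAt_mul_sub_nonpos {f : ℝ → ℝ} {f' x y : ℝ} {s : Set ℝ}
    (hs : Convex ℝ s) (hx : x ∈ s) (hy : y ∈ s) (h : IsMaxOn f s x)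
    (hf : HasDerivWithinAt f f' s x) : f' * (y - x) ≤ 0 := by
  simpa [mul_comm] using h.localize.hasFDerivWithinAt_nonpos hf.hasFDerivWithinAt
    (sub_mem_posTangentConeAt_of_segment_subset (hs.segment_subset hx hy))

theorem IsMinOn.hasDerivWithinAt_mul_sub_nonneg {f : ℝ → ℝ} {f' x y : ℝ} {s : Set ℝ}
    (hs : Convex ℝ s) (hx : x ∈ s) (hy : y ∈ s) (h : IsMinOn f s x)
    (hf : HasDerivWithinAt f f' s x) : 0 ≤ f' * (y - x) := by
  simpa [mul_comm] using h.localize.hasFDerivWithinAt_nonneg hf.hasFDerivWithinAt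
    (sub_mem_posTangentConeAt_of_segment_subset (hs.segment_subset hx hy))

theorem IsMinOn.hasDerivWithinAt_mul_nonpos_of_isMaxOn {f g : ℝ → ℝ} {f' g' x y : ℝ}
    {s : Set ℝ} (hs : Convex ℝ s) (hx : x ∈ s) (hy : y ∈ s) (hyx : y ≠ x)
    (hfmin : IsMinOn f s x) (hgmax : IsMaxOn g s x)
    (hf : HasDerivWithinAt f f' s x) (hg : HasDerivWithinAt g g' s x) : f' * g' ≤ 0 := by
  have hf' := hfmin.hasDerivWithinAt_mul_sub_nonneg hs hx hy hf
  have hg' := hgmax.hasDerivWithinAt_mul_sub_nonpos hs hx hy hg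
  have hyx' : 0 < (y - x) ^ 2 := sq_pos_of_ne_zero (sub_ne_zero.2 hyx)
  nlinarith [mul_nonpos_of_nonneg_of_nonpos hf' hg']

theorem IsLocalMax.hasDerivAt_hasDerivAt_nonpos {f f' : ℝ → ℝ} {f'' x₀ : ℝ}
    (h : IsLocalMax f x₀) (hf : ∀ᶠ x in 𝓝 x₀, HasDerivAt f (f' x) x)
    (hf' : HasDerivAt f' f'' x₀) : f'' ≤ 0 := by
  by_contra! hpos
  have hderiv : deriv f =ᶠ[𝓝 x₀] f' := hf.mono fun x hx => hx.deriv
  have hcrit : deriv f x₀ = 0 := h.deriv_eq_zero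
  -- By the sufficient second-derivative test `x₀` is also a local minimum,
  -- so `f` is locally constant and `f'' = 0`.
  have hmin : IsLocalMin f x₀ :=
    isLocalMin_of_deriv_deriv_pos (by rwa [(hf'.congr_of_eventuallyEq hderiv).deriv]) hcrit
      hf.self_of_nhds.continuousAt
  have hconst : f =ᶠ[𝓝 x₀] fun _ => f x₀ := (hmin.and h).mono fun _ hx => le_antisymm hx.2 hx.1
  have hf'_zero : f' =ᶠ[𝓝 x₀] fun _ => 0 :=
    hderiv.symm.trans (hconst.deriv.trans (by simp))
  have := (hf'.congr_of_eventuallyEq hf'_zero.symm).unique (hasDerivAt_const x₀ (0 : ℝ))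
  exact hpos.ne' this

theorem degenerate_diffusion_nonpos_of_isMaxOn {a v v' : ℝ → ℝ} {a' v'' b c x₀ : ℝ}
    (hbc : b < c) (hx₀ : x₀ ∈ Icc b c)
    (ha : HasDerivWithinAt a a' (Icc b c) x₀) (ha_nonneg : ∀ x ∈ Icc b c, 0 ≤ a x)
    (hab : a b = 0) (hac : a c = 0)
    (hv : ∀ x ∈ Icc b c, HasDerivWithinAt v (v' x) (Icc b c) x)
    (hv' : HasDerivWithinAt v' v'' (Icc b c) x₀) (hmax : IsMaxOn v (Icc b c) x₀) :
    a x₀ * v'' + a' * v' x₀ ≤ 0 := by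
  by_cases hint : x₀ ∈ Ioo b c
  · have hnhds : Icc b c ∈ 𝓝 x₀ := Icc_mem_nhds hint.1 hint.2
    have hvd : ∀ᶠ x in 𝓝 x₀, HasDerivAt v (v' x) x := by
      filter_upwards [Ioo_mem_nhds hint.1 hint.2] with x hx
      exact (hv x (Ioo_subset_Icc_self hx)).hasDerivAt (Icc_mem_nhds hx.1 hx.2)
    have hlocal := hmax.isLocalMax hnhds
    have hcrit : v' x₀ = 0 := hlocal.hasDerivAt_eq_zero hvd.self_of_nhds
    have hconcave : v'' ≤ 0 := hlocal.hasDerivAt_hasDerivAt_nonpos hvd (hv'.hasDerivAt hnhds)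
    rw [hcrit, mul_zero, add_zero]
    exact mul_nonpos_of_nonneg_of_nonpos (ha_nonneg x₀ hx₀) hconcave
  · have hax₀ : a x₀ = 0 := by
      rcases eq_endpoints_or_mem_Ioo_of_mem_Icc hx₀ with rfl | rfl | h
      exacts [hab, hac, absurd h hint]
    have hamin : IsMinOn a (Icc b c) x₀ := fun x hx => by
      simpa [hax₀] using ha_nonneg x hx
    obtain ⟨y, hy, hyx⟩ : ∃ y ∈ Icc b c, y ≠ x₀ := by
      rcases eq_or_ne x₀ b with rfl | hb
      · exact ⟨c, right_mem_Icc.2 hbc.le, hbc.ne'⟩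
      · exact ⟨b, left_mem_Icc.2 hbc.le, hb.symm⟩
    rw [hax₀, zero_mul, zero_add]
    exact hamin.hasDerivWithinAt_mul_nonpos_of_isMaxOn (convex_Icc b c) hx₀ hy hyx hmax ha
      (hv x₀ hx₀)

theorem weak_maximum_principle_general
    (l T q₀ : ℝ) (hl : 0 < l) (hq₀ : 0 < q₀)
    (a a' q : ℝ → ℝ)
    (ha : ∀ x ∈ Icc (0:ℝ) l, HasDerivWithinAt a (a' x) (Icc (0:ℝ) l) x)
    (ha0 : a 0 = 0) (hal : a l = 0)
    (hapos : ∀ x ∈ Ioo (0:ℝ) l, 0 < a x)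
    (hq : ∀ x ∈ Icc (0:ℝ) l, q₀ ≤ q x)
    (u ut ux uxx : ℝ → ℝ → ℝ)
    (hut : ∀ x ∈ Icc (0:ℝ) l, ∀ t ∈ Ioc (0:ℝ) T,
      HasDerivWithinAt (fun τ => u x τ) (ut x t) (Icc (0:ℝ) T) t)
    (hux : ∀ x ∈ Icc (0:ℝ) l, ∀ t ∈ Ioc (0:ℝ) T,
      HasDerivWithinAt (fun s => u s t) (ux x t) (Icc (0:ℝ) l) x)
    (huxx : ∀ x ∈ Icc (0:ℝ) l, ∀ t ∈ Ioc (0:ℝ) T,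
      HasDerivWithinAt (fun s => ux s t) (uxx x t) (Icc (0:ℝ) l) x)
    (hL : ∀ x ∈ Icc (0:ℝ) l, ∀ t ∈ Ioc (0:ℝ) T,
      ut x t - (a x * uxx x t + a' x * ux x t) + q x * u x t ≤ 0)
    (x₀ t₀ : ℝ) (hx₀ : x₀ ∈ Icc (0:ℝ) l) (ht₀ : t₀ ∈ Icc (0:ℝ) T)
    (hpos : 0 < u x₀ t₀)
    (hmax : ∀ x ∈ Icc (0:ℝ) l, ∀ t ∈ Icc (0:ℝ) T, u x t ≤ u x₀ t₀) :
    t₀ = 0 := by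
  by_contra ht₀_ne
  have ht₀' : t₀ ∈ Ioc 0 T := ⟨ht₀.1.lt_of_ne' ht₀_ne, ht₀.2⟩
  have h_time : 0 ≤ ut x₀ t₀ := by
    have := IsMaxOn.hasDerivWithinAt_mul_sub_nonpos (convex_Icc 0 T) ht₀
      ⟨le_rfl, ht₀.1.trans ht₀.2⟩ (fun t ht => hmax x₀ hx₀ t ht) (hut x₀ hx₀ t₀ ht₀')
    nlinarith [ht₀'.1]
  have ha_nonneg : ∀ x ∈ Icc 0 l, 0 ≤ a x := by
    intro x hx
    rcases eq_endpoints_or_mem_Ioo_of_mem_Icc hx with rfl | rfl | hx'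
    exacts [ha0.ge, hal.ge, (hapos x hx').le]
  have h_space : a x₀ * uxx x₀ t₀ + a' x₀ * ux x₀ t₀ ≤ 0 :=
    degenerate_diffusion_nonpos_of_isMaxOn hl hx₀ (ha x₀ hx₀) ha_nonneg ha0 hal
      (fun x hx => hux x hx t₀ ht₀') (huxx x₀ hx₀ t₀ ht₀') (fun x hx => hmax x hx t₀ ht₀)
  have h_reaction : 0 < q x₀ * u x₀ t₀ := mul_pos (hq₀.trans_le (hq x₀ hx₀)) hpos
  linarith [hL x₀ hx₀ t₀ ht₀']

/-- Weak maximum principle (Lemma 2.2): if `𝓛u ≤ 0` on `[0,l] × (0,T]` and the admissible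
function `u` attains a positive maximum over `Q̄ = [0,l] × [0,T]` at `(x₀, t₀)`,
then `t₀ = 0`. -/
theorem weak_maximum_principle
    (l T q₀ : ℝ) (hl : 0 < l) (hT : 0 < T) (hq₀ : 0 < q₀)
    (a a' q : ℝ → ℝ)
    (ha : ∀ x ∈ Icc (0:ℝ) l, HasDerivWithinAt a (a' x) (Icc (0:ℝ) l) x)
    (ha'c : ContinuousOn a' (Icc (0:ℝ) l))
    (ha0 : a 0 = 0) (hal : a l = 0)
    (hapos : ∀ x ∈ Ioo (0:ℝ) l, 0 < a x)
    (hqc : ContinuousOn q (Icc (0:ℝ) l))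
    (hq : ∀ x ∈ Icc (0:ℝ) l, q₀ ≤ q x)
    (u ut ux uxx : ℝ → ℝ → ℝ)
    (hu : ContinuousOn (fun p : ℝ × ℝ => u p.1 p.2) (Icc (0:ℝ) l ×ˢ Icc (0:ℝ) T))
    (hut : ∀ x ∈ Icc (0:ℝ) l, ∀ t ∈ Ioc (0:ℝ) T,
      HasDerivWithinAt (fun τ => u x τ) (ut x t) (Icc (0:ℝ) T) t)
    (hux : ∀ x ∈ Icc (0:ℝ) l, ∀ t ∈ Ioc (0:ℝ) T,
      HasDerivWithinAt (fun s => u s t) (ux x t) (Icc (0:ℝ) l) x)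
    (huxx : ∀ x ∈ Icc (0:ℝ) l, ∀ t ∈ Ioc (0:ℝ) T,
      HasDerivWithinAt (fun s => ux s t) (uxx x t) (Icc (0:ℝ) l) x)
    (hL : ∀ x ∈ Icc (0:ℝ) l, ∀ t ∈ Ioc (0:ℝ) T,
      ut x t - (a x * uxx x t + a' x * ux x t) + q x * u x t ≤ 0)
    (x₀ t₀ : ℝ) (hx₀ : x₀ ∈ Icc (0:ℝ) l) (ht₀ : t₀ ∈ Icc (0:ℝ) T)
    (hpos : 0 < u x₀ t₀)
    (hmax : ∀ x ∈ Icc (0:ℝ) l, ∀ t ∈ Icc (0:ℝ) T, u x t ≤ u x₀ t₀) :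
    t₀ = 0 :=
  weak_maximum_principle_general l T q₀ hl hq₀ a a' q ha ha0 hal hapos hq u ut ux uxx hut hux huxx
    hL x₀ t₀ hx₀ ht₀ hpos hmax
end

section
/- Degenerate boundary step in the proof of the weak maximum principle: Let u be admissible and suppose u attains a positive maximum M = max_{Q̄} u > 0 at a point (0,t₁) with 0 < t₁ ≤ T on the degenerate boundary x = 0. Then a'(0) ≥ 0, the one-sided derivative u_x(0,t₁) = lim_{x→0⁺}(u(x,t₁) − u(0,t₁))/x satisfies u_x(0,t₁) ≤ 0, u_t(0,t₁) ≥ 0, and consequently 𝓛u(0,t₁) = u_t(0,t₁) − a(0)u_{xx}(0,t₁) − a'(0)u_x(0,t₁) + q(0)M ≥ q(0)M ≥ q₀M > 0. -/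
open Set

/-
A one-sided derivative at an endpoint maximum has a sign: at `(0, t₁)` the function
`x ↦ u(x, t₁)` is maximal at the left end of `[0, l]`, so `uₓ ≤ 0`, and `t ↦ u(0, t)` is maximal at
the right end of `[0, t₁]`, so `u_t ≥ 0`; likewise `a ≥ 0 = a(0)` on `[0, l)` forces `a'(0) ≥ 0`.
With `a(0) = 0` the diffusion term vanishes and the drift term `-a'(0) uₓ` is nonnegative, so
`𝓛u(0, t₁) ≥ q(0) M ≥ q₀ M > 0`.
-/

section EndpointExtremum

variable {f : ℝ → ℝ} {s : Set ℝ} {f' a b : ℝ}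

theorem IsLocalMaxOn.hasDerivWithinAt_nonpos_of_Ioo_subset (h : IsLocalMaxOn f s a)
    (hf : HasDerivWithinAt f f' s a) (hab : a < b) (hs : Ioo a b ⊆ s) : f' ≤ 0 := by
  have hcone : b - a ∈ posTangentConeAt s a :=
    sub_mem_posTangentConeAt_of_openSegment_subset (openSegment_eq_Ioo hab ▸ hs)
  have hslope : (b - a) * f' ≤ 0 := by
    simpa using h.hasFDerivWithinAt_nonpos hf.hasFDerivWithinAt hcone
  exact nonpos_of_mul_nonpos_right hslope (sub_pos.2 hab)

theorem IsLocalMinOn.hasDerivWithinAt_nonneg_of_Ioo_subset (h : IsLocalMinOn f s a)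
    (hf : HasDerivWithinAt f f' s a) (hab : a < b) (hs : Ioo a b ⊆ s) : 0 ≤ f' :=
  neg_nonpos.1 (h.neg.hasDerivWithinAt_nonpos_of_Ioo_subset hf.neg hab hs)

theorem IsLocalMaxOn.hasDerivWithinAt_nonneg_of_Ioo_subset (h : IsLocalMaxOn f s b)
    (hf : HasDerivWithinAt f f' s b) (hab : a < b) (hs : Ioo a b ⊆ s) : 0 ≤ f' := by
  have hcone : a - b ∈ posTangentConeAt s b :=
    sub_mem_posTangentConeAt_of_openSegment_subset
      (by rwa [openSegment_symm, openSegment_eq_Ioo hab])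
  have hslope : (a - b) * f' ≤ 0 := by
    simpa using h.hasFDerivWithinAt_nonpos hf.hasFDerivWithinAt hcone
  exact nonneg_of_mul_nonpos_right hslope (sub_neg.2 hab)

end EndpointExtremum

theorem isMinOn_Ico_of_pos_on_Ioo {g : ℝ → ℝ} {a b : ℝ} (hga : g a = 0)
    (hpos : ∀ x ∈ Ioo a b, 0 < g x) : IsMinOn g (Ico a b) a := by
  intro x (hx : x ∈ Ico a b)
  show g a ≤ g x
  rcases hx.1.eq_or_lt with rfl | hax
  · exact le_rfl
  · exact hga ▸ (hpos x ⟨hax, hx.2⟩).le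

theorem boundary_step_weak_maximum_principle_general
    (l T q₀ : ℝ) (hl : 0 < l) (hq₀ : 0 < q₀)
    (a a' q : ℝ → ℝ)
    (ha : ∀ x ∈ Icc (0:ℝ) l, HasDerivWithinAt a (a' x) (Icc (0:ℝ) l) x)
    (ha0 : a 0 = 0)
    (hapos : ∀ x ∈ Ioo (0:ℝ) l, 0 < a x)
    (hq : ∀ x ∈ Icc (0:ℝ) l, q₀ ≤ q x)
    (u ut ux uxx : ℝ → ℝ → ℝ)
    (hut : ∀ x ∈ Icc (0:ℝ) l, ∀ t ∈ Ioc (0:ℝ) T,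
      HasDerivWithinAt (fun τ => u x τ) (ut x t) (Icc (0:ℝ) T) t)
    (hux : ∀ x ∈ Icc (0:ℝ) l, ∀ t ∈ Ioc (0:ℝ) T,
      HasDerivWithinAt (fun s => u s t) (ux x t) (Icc (0:ℝ) l) x)
    (t₁ M : ℝ) (ht₁ : t₁ ∈ Ioc (0:ℝ) T)
    (hM : u 0 t₁ = M) (hMpos : 0 < M)
    (hmax : ∀ x ∈ Icc (0:ℝ) l, ∀ t ∈ Icc (0:ℝ) T, u x t ≤ M) :
    0 ≤ a' 0 ∧ ux 0 t₁ ≤ 0 ∧ 0 ≤ ut 0 t₁ ∧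
    q 0 * M ≤ ut 0 t₁ - (a 0 * uxx 0 t₁ + a' 0 * ux 0 t₁) + q 0 * M ∧
    q₀ * M ≤ q 0 * M ∧ 0 < q₀ * M := by
  have h0l : (0:ℝ) ∈ Icc 0 l := left_mem_Icc.2 hl.le
  have ha'0 : 0 ≤ a' 0 :=
    (isMinOn_Ico_of_pos_on_Ioo ha0 hapos).localize.hasDerivWithinAt_nonneg_of_Ioo_subset
      ((ha 0 h0l).mono Ico_subset_Icc_self) hl Ioo_subset_Ico_self
  have hux0 : ux 0 t₁ ≤ 0 := by
    have hmax_x : IsMaxOn (fun x => u x t₁) (Icc 0 l) 0 := fun x hx => by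
      simpa [hM] using hmax x hx t₁ (Ioc_subset_Icc_self ht₁)
    exact hmax_x.localize.hasDerivWithinAt_nonpos_of_Ioo_subset (hux 0 h0l t₁ ht₁) hl
      Ioo_subset_Icc_self
  have hut0 : 0 ≤ ut 0 t₁ := by
    have hmax_t : IsMaxOn (fun t => u 0 t) (Icc 0 T) t₁ := fun t ht => by
      simpa [hM] using hmax 0 h0l t ht
    exact hmax_t.localize.hasDerivWithinAt_nonneg_of_Ioo_subset (hut 0 h0l t₁ ht₁) ht₁.1
      (Ioo_subset_Ioo_right ht₁.2 |>.trans Ioo_subset_Icc_self)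
  have hdrift : a' 0 * ux 0 t₁ ≤ 0 := mul_nonpos_of_nonneg_of_nonpos ha'0 hux0
  refine ⟨ha'0, hux0, hut0, ?_, mul_le_mul_of_nonneg_right (hq 0 h0l) hMpos.le,
    mul_pos hq₀ hMpos⟩
  rw [ha0, zero_mul, zero_add]
  linarith

/-- Degenerate boundary step in the proof of the weak maximum principle: at a positive
maximum point `(0, t₁)` on the degenerate boundary `x = 0` one has `a'(0) ≥ 0`,
`uₓ(0,t₁) ≤ 0`, `u_t(0,t₁) ≥ 0`, and `𝓛u(0,t₁) ≥ q(0)M ≥ q₀M > 0`. -/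
theorem boundary_step_weak_maximum_principle
    (l T q₀ : ℝ) (hl : 0 < l) (hT : 0 < T) (hq₀ : 0 < q₀)
    (a a' q : ℝ → ℝ)
    (ha : ∀ x ∈ Icc (0:ℝ) l, HasDerivWithinAt a (a' x) (Icc (0:ℝ) l) x)
    (ha'c : ContinuousOn a' (Icc (0:ℝ) l))
    (ha0 : a 0 = 0) (hal : a l = 0)
    (hapos : ∀ x ∈ Ioo (0:ℝ) l, 0 < a x)
    (hqc : ContinuousOn q (Icc (0:ℝ) l))
    (hq : ∀ x ∈ Icc (0:ℝ) l, q₀ ≤ q x)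
    (u ut ux uxx : ℝ → ℝ → ℝ)
    (hu : ContinuousOn (fun p : ℝ × ℝ => u p.1 p.2) (Icc (0:ℝ) l ×ˢ Icc (0:ℝ) T))
    (hut : ∀ x ∈ Icc (0:ℝ) l, ∀ t ∈ Ioc (0:ℝ) T,
      HasDerivWithinAt (fun τ => u x τ) (ut x t) (Icc (0:ℝ) T) t)
    (hux : ∀ x ∈ Icc (0:ℝ) l, ∀ t ∈ Ioc (0:ℝ) T,
      HasDerivWithinAt (fun s => u s t) (ux x t) (Icc (0:ℝ) l) x)
    (huxx : ∀ x ∈ Icc (0:ℝ) l, ∀ t ∈ Ioc (0:ℝ) T,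
      HasDerivWithinAt (fun s => ux s t) (uxx x t) (Icc (0:ℝ) l) x)
    (t₁ M : ℝ) (ht₁ : t₁ ∈ Ioc (0:ℝ) T)
    (hM : u 0 t₁ = M) (hMpos : 0 < M)
    (hmax : ∀ x ∈ Icc (0:ℝ) l, ∀ t ∈ Icc (0:ℝ) T, u x t ≤ M) :
    0 ≤ a' 0 ∧ ux 0 t₁ ≤ 0 ∧ 0 ≤ ut 0 t₁ ∧
    q 0 * M ≤ ut 0 t₁ - (a 0 * uxx 0 t₁ + a' 0 * ux 0 t₁) + q 0 * M ∧
    q₀ * M ≤ q 0 * M ∧ 0 < q₀ * M :=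
  boundary_step_weak_maximum_principle_general l T q₀ hl hq₀ a a' q ha ha0 hapos hq u ut ux uxx hut
    hux t₁ M ht₁ hM hMpos hmax
end

section
/- Weak minimum principle (Corollary 2.3): Let u be admissible and satisfy 𝓛u(x,t) ≥ 0 for every (x,t) ∈ [0,l] × (0,T]. If u attains a negative minimum over Q̄, i.e. there is a point (x₀,t₀) ∈ Q̄ with u(x₀,t₀) = min_{Q̄} u < 0, then necessarily t₀ = 0. -/
open Set Filter Topology

/-!
If `t₀ > 0`, the minimum gives `u_t ≤ 0` (a one-sided derivative in time) and `(a u_x)_x ≥ 0`,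
hence `𝓛u ≤ q u < 0` at `(x₀, t₀)`. No boundary condition is needed at the degenerate endpoints:
there `a = 0` is a minimum of `a`, so `a'` has the same sign as `u_x`.
-/

section MinimumOnInterval

variable {f g : ℝ → ℝ} {f' g' a b c : ℝ}

theorem IsMinOn.hasDerivWithinAt_nonneg (hmin : IsMinOn f (Icc a b) c)
    (hf : HasDerivWithinAt f f' (Icc a b) c) (hc : c ∈ Ico a b) : 0 ≤ f' := by
  have hcone : b - c ∈ posTangentConeAt (Icc a b) c :=
    sub_mem_posTangentConeAt_of_segment_subset
      ((segment_eq_Icc hc.2.le).subset.trans (Icc_subset_Icc_left hc.1))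
  have h := hmin.localize.hasFDerivWithinAt_nonneg hf hcone
  simp only [ContinuousLinearMap.toSpanSingleton_apply, smul_eq_mul] at h
  exact nonneg_of_mul_nonneg_right h (sub_pos.2 hc.2)

theorem IsMinOn.hasDerivWithinAt_nonpos (hmin : IsMinOn f (Icc a b) c)
    (hf : HasDerivWithinAt f f' (Icc a b) c) (hc : c ∈ Ioc a b) : f' ≤ 0 := by
  have hcone : a - c ∈ posTangentConeAt (Icc a b) c :=
    sub_mem_posTangentConeAt_of_segment_subset
      (by rw [segment_symm, segment_eq_Icc hc.1.le]; exact Icc_subset_Icc_right hc.2)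
  have h := hmin.localize.hasFDerivWithinAt_nonneg hf hcone
  simp only [ContinuousLinearMap.toSpanSingleton_apply, smul_eq_mul] at h
  exact nonpos_of_mul_nonneg_right h (sub_neg.2 hc.1)

theorem IsMinOn.mul_hasDerivWithinAt_nonneg (hab : a < b) (hc : c ∈ Icc a b)
    (hf_min : IsMinOn f (Icc a b) c) (hg_min : IsMinOn g (Icc a b) c)
    (hf : HasDerivWithinAt f f' (Icc a b) c) (hg : HasDerivWithinAt g g' (Icc a b) c) :
    0 ≤ f' * g' := by
  rcases hc.2.lt_or_eq with hcb | rfl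
  · exact mul_nonneg (hf_min.hasDerivWithinAt_nonneg hf ⟨hc.1, hcb⟩)
      (hg_min.hasDerivWithinAt_nonneg hg ⟨hc.1, hcb⟩)
  · exact mul_nonneg_of_nonpos_of_nonpos (hf_min.hasDerivWithinAt_nonpos hf ⟨hab, le_rfl⟩)
      (hg_min.hasDerivWithinAt_nonpos hg ⟨hab, le_rfl⟩)

end MinimumOnInterval

/-- If `f'' < 0`, the second derivative test makes `c` also a local maximum, so `f` is locally
constant and `f'' = 0`. -/
theorem IsLocalMin.nonneg_second_deriv {f f' : ℝ → ℝ} {f'' c : ℝ} (hmin : IsLocalMin f c)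
    (hf : ∀ᶠ x in 𝓝 c, HasDerivAt f (f' x) x) (hf' : HasDerivAt f' f'' c) : 0 ≤ f'' := by
  by_contra! hneg
  have hderiv : deriv f =ᶠ[𝓝 c] f' := hf.mono fun x hx => hx.deriv
  have hmax : IsLocalMax f c :=
    isLocalMax_of_deriv_deriv_neg (by rwa [hderiv.deriv_eq, hf'.deriv])
      (by rw [hderiv.eq_of_nhds, hmin.hasDerivAt_eq_zero hf.self_of_nhds])
      hf.self_of_nhds.continuousAt
  have hconst : f =ᶠ[𝓝 c] fun _ => f c :=
    (hmin.and hmax).mono fun x hx => le_antisymm hx.2 hx.1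
  have hf'_zero : f' =ᶠ[𝓝 c] fun _ => 0 := by
    filter_upwards [hconst.eventually_nhds, hf] with x hconst_x hfx
    exact hfx.unique ((hasDerivAt_const x (f c)).congr_of_eventuallyEq hconst_x)
  exact hneg.ne ((hf'.congr_of_eventuallyEq hf'_zero.symm).unique (hasDerivAt_const c 0))

theorem IsMinOn.nonneg_second_deriv_of_mem_Ioo {v v' : ℝ → ℝ} {v'' a b c : ℝ}
    (hmin : IsMinOn v (Icc a b) c) (hc : c ∈ Ioo a b)
    (hv : ∀ x ∈ Icc a b, HasDerivWithinAt v (v' x) (Icc a b) x)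
    (hv' : HasDerivWithinAt v' v'' (Icc a b) c) : 0 ≤ v'' := by
  refine (hmin.isLocalMin (Icc_mem_nhds hc.1 hc.2)).nonneg_second_deriv ?_
    (hv'.hasDerivAt (Icc_mem_nhds hc.1 hc.2))
  filter_upwards [Ioo_mem_nhds hc.1 hc.2] with x hx
  exact (hv x (Ioo_subset_Icc_self hx)).hasDerivAt (Icc_mem_nhds hx.1 hx.2)

theorem IsMinOn.degenerate_flux_deriv_nonneg {κ κ' v v' : ℝ → ℝ} {v'' a b c : ℝ}
    (hab : a < b) (hc : c ∈ Icc a b) (hκ : HasDerivWithinAt κ (κ' c) (Icc a b) c)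
    (hκ_nonneg : ∀ x ∈ Icc a b, 0 ≤ κ x) (hκa : κ a = 0) (hκb : κ b = 0)
    (hmin : IsMinOn v (Icc a b) c)
    (hv : ∀ x ∈ Icc a b, HasDerivWithinAt v (v' x) (Icc a b) x)
    (hv' : HasDerivWithinAt v' v'' (Icc a b) c) :
    0 ≤ κ c * v'' + κ' c * v' c := by
  by_cases hc_int : c ∈ Ioo a b
  · have hv'_zero : v' c = 0 :=
      (hmin.isLocalMin (Icc_mem_nhds hc_int.1 hc_int.2)).hasDerivAt_eq_zero
        ((hv c hc).hasDerivAt (Icc_mem_nhds hc_int.1 hc_int.2))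
    rw [hv'_zero, mul_zero, add_zero]
    exact mul_nonneg (hκ_nonneg c hc) (hmin.nonneg_second_deriv_of_mem_Ioo hc_int hv hv')
  · have hκc : κ c = 0 := by
      have : c ∈ ({a, b} : Set ℝ) := Icc_sdiff_Ioo_same hab.le ▸ ⟨hc, hc_int⟩
      rcases this with rfl | rfl
      exacts [hκa, hκb]
    have hκ_min : IsMinOn κ (Icc a b) c := fun x hx => hκc ▸ hκ_nonneg x hx
    rw [hκc, zero_mul, zero_add]
    exact hκ_min.mul_hasDerivWithinAt_nonneg hab hc hmin hκ (hv c hc)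

theorem weak_minimum_principle_general
    (l T q₀ : ℝ) (hl : 0 < l) (hq₀ : 0 < q₀)
    (a a' q : ℝ → ℝ)
    (ha : ∀ x ∈ Icc (0:ℝ) l, HasDerivWithinAt a (a' x) (Icc (0:ℝ) l) x)
    (ha0 : a 0 = 0) (hal : a l = 0)
    (hapos : ∀ x ∈ Ioo (0:ℝ) l, 0 < a x)
    (hq : ∀ x ∈ Icc (0:ℝ) l, q₀ ≤ q x)
    (u ut ux uxx : ℝ → ℝ → ℝ)
    (hut : ∀ x ∈ Icc (0:ℝ) l, ∀ t ∈ Ioc (0:ℝ) T,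
      HasDerivWithinAt (fun τ => u x τ) (ut x t) (Icc (0:ℝ) T) t)
    (hux : ∀ x ∈ Icc (0:ℝ) l, ∀ t ∈ Ioc (0:ℝ) T,
      HasDerivWithinAt (fun s => u s t) (ux x t) (Icc (0:ℝ) l) x)
    (huxx : ∀ x ∈ Icc (0:ℝ) l, ∀ t ∈ Ioc (0:ℝ) T,
      HasDerivWithinAt (fun s => ux s t) (uxx x t) (Icc (0:ℝ) l) x)
    (hL : ∀ x ∈ Icc (0:ℝ) l, ∀ t ∈ Ioc (0:ℝ) T,
      0 ≤ ut x t - (a x * uxx x t + a' x * ux x t) + q x * u x t)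
    (x₀ t₀ : ℝ) (hx₀ : x₀ ∈ Icc (0:ℝ) l) (ht₀ : t₀ ∈ Icc (0:ℝ) T)
    (hneg : u x₀ t₀ < 0)
    (hmin : ∀ x ∈ Icc (0:ℝ) l, ∀ t ∈ Icc (0:ℝ) T, u x₀ t₀ ≤ u x t) :
    t₀ = 0 := by
  by_contra ht₀_ne
  have ht₀_pos : t₀ ∈ Ioc 0 T := ⟨ht₀.1.lt_of_ne' ht₀_ne, ht₀.2⟩
  have hut_nonpos : ut x₀ t₀ ≤ 0 :=
    IsMinOn.hasDerivWithinAt_nonpos (isMinOn_iff.2 (hmin x₀ hx₀))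
      (hut x₀ hx₀ t₀ ht₀_pos) ht₀_pos
  have ha_nonneg : ∀ x ∈ Icc 0 l, 0 ≤ a x := by
    rintro x ⟨h0x, hxl⟩
    rcases h0x.eq_or_lt with rfl | h0x
    · exact ha0.ge
    rcases hxl.eq_or_lt with rfl | hxl
    · exact hal.ge
    exact (hapos x ⟨h0x, hxl⟩).le
  have hflux : 0 ≤ a x₀ * uxx x₀ t₀ + a' x₀ * ux x₀ t₀ :=
    IsMinOn.degenerate_flux_deriv_nonneg hl hx₀ (ha x₀ hx₀) ha_nonneg ha0 hal
      (isMinOn_iff.2 fun x hx => hmin x hx t₀ ht₀) (fun x hx => hux x hx t₀ ht₀_pos)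
      (huxx x₀ hx₀ t₀ ht₀_pos)
  have hqu_neg : q x₀ * u x₀ t₀ < 0 := mul_neg_of_pos_of_neg (hq₀.trans_le (hq x₀ hx₀)) hneg
  linarith [hL x₀ hx₀ t₀ ht₀_pos]

/-- Weak minimum principle (Corollary 2.3): if `𝓛u ≥ 0` on `[0,l] × (0,T]` and the
admissible function `u` attains a negative minimum over `Q̄` at `(x₀, t₀)`, then `t₀ = 0`. -/
theorem weak_minimum_principle
    (l T q₀ : ℝ) (hl : 0 < l) (hT : 0 < T) (hq₀ : 0 < q₀)
    (a a' q : ℝ → ℝ)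
    (ha : ∀ x ∈ Icc (0:ℝ) l, HasDerivWithinAt a (a' x) (Icc (0:ℝ) l) x)
    (ha'c : ContinuousOn a' (Icc (0:ℝ) l))
    (ha0 : a 0 = 0) (hal : a l = 0)
    (hapos : ∀ x ∈ Ioo (0:ℝ) l, 0 < a x)
    (hqc : ContinuousOn q (Icc (0:ℝ) l))
    (hq : ∀ x ∈ Icc (0:ℝ) l, q₀ ≤ q x)
    (u ut ux uxx : ℝ → ℝ → ℝ)
    (hu : ContinuousOn (fun p : ℝ × ℝ => u p.1 p.2) (Icc (0:ℝ) l ×ˢ Icc (0:ℝ) T))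
    (hut : ∀ x ∈ Icc (0:ℝ) l, ∀ t ∈ Ioc (0:ℝ) T,
      HasDerivWithinAt (fun τ => u x τ) (ut x t) (Icc (0:ℝ) T) t)
    (hux : ∀ x ∈ Icc (0:ℝ) l, ∀ t ∈ Ioc (0:ℝ) T,
      HasDerivWithinAt (fun s => u s t) (ux x t) (Icc (0:ℝ) l) x)
    (huxx : ∀ x ∈ Icc (0:ℝ) l, ∀ t ∈ Ioc (0:ℝ) T,
      HasDerivWithinAt (fun s => ux s t) (uxx x t) (Icc (0:ℝ) l) x)
    (hL : ∀ x ∈ Icc (0:ℝ) l, ∀ t ∈ Ioc (0:ℝ) T,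
      0 ≤ ut x t - (a x * uxx x t + a' x * ux x t) + q x * u x t)
    (x₀ t₀ : ℝ) (hx₀ : x₀ ∈ Icc (0:ℝ) l) (ht₀ : t₀ ∈ Icc (0:ℝ) T)
    (hneg : u x₀ t₀ < 0)
    (hmin : ∀ x ∈ Icc (0:ℝ) l, ∀ t ∈ Icc (0:ℝ) T, u x₀ t₀ ≤ u x t) :
    t₀ = 0 :=
  weak_minimum_principle_general l T q₀ hl hq₀ a a' q ha ha0 hal hapos hq u ut ux uxx hut hux huxx
    hL x₀ t₀ hx₀ ht₀ hneg hmin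
end

section
/- Comparison principle used in the proof of Theorem 2.4: Let v be admissible and satisfy 𝓛v(x,t) ≥ 0 for every (x,t) ∈ [0,l] × (0,T] and v(x,0) ≥ 0 for every x ∈ [0,l]. Then v(x,t) ≥ 0 for every (x,t) ∈ Q̄. -/
/-!
Let `(x₀, t₀)` be a minimum point of `u` on the compact rectangle and suppose `u x₀ t₀ < 0`.
Then `t₀ > 0`, so `u_t ≤ 0` there, while `(a u_x)_x ≥ 0`: in the interior `u_x = 0` and
`u_xx ≥ 0`; at an endpoint `a` vanishes, and `a` (which has a minimum there) and `u(·, t₀)`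
both have one-sided derivatives of the same sign towards the inside, so `a' u_x ≥ 0`.
Hence `𝓛u ≤ q u < 0` at `(x₀, t₀)`, a contradiction.
-/

open Set Topology Filter

theorem IsMinOn.hasDerivWithinAt_mul_sub_nonneg_s4 {f : ℝ → ℝ} {s : Set ℝ} {f' a b : ℝ}
    (hmin : IsMinOn f s a) (hf : HasDerivWithinAt f f' s a) (hab : segment ℝ a b ⊆ s) :
    0 ≤ f' * (b - a) := by
  simpa [mul_comm] using
    hmin.localize.hasFDerivWithinAt_nonneg hf (sub_mem_posTangentConeAt_of_segment_subset hab)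

theorem IsLocalMin.second_deriv_nonneg {f g : ℝ → ℝ} {g' x₀ : ℝ}
    (hmin : IsLocalMin f x₀) (hf : ∀ᶠ x in 𝓝 x₀, HasDerivAt f (g x) x)
    (hg : HasDerivAt g g' x₀) : 0 ≤ g' := by
  -- If `g' < 0`, then `g < 0` just right of `x₀`, and the mean value theorem pushes `f` below
  -- `f x₀` there.
  by_contra! hneg
  have hgx₀ : g x₀ = 0 := hmin.hasDerivAt_eq_zero hf.self_of_nhds
  have hslope : ∀ᶠ y in 𝓝[>] x₀, slope g x₀ y < 0 :=
    nhdsGT_le_nhdsNE x₀ ((hasDerivAt_iff_tendsto_slope.1 hg).eventually (eventually_lt_nhds hneg))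
  obtain ⟨b, hxb, hb⟩ := mem_nhdsGT_iff_exists_Ioc_subset.1
    (hslope.and (nhdsWithin_le_nhds (hf.and hmin)))
  have hcont : ContinuousOn f (Icc x₀ b) := by
    intro y hy
    rcases hy.1.eq_or_lt with rfl | hy₀
    · exact hf.self_of_nhds.continuousAt.continuousWithinAt
    · exact (hb ⟨hy₀, hy.2⟩).2.1.continuousAt.continuousWithinAt
  obtain ⟨c, hc, hgc⟩ := exists_hasDerivAt_eq_slope f g hxb hcont
    fun y hy => (hb (Ioo_subset_Ioc_self hy)).2.1
  have hgc_neg : g c < 0 := by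
    simpa [hgx₀] using (slope_neg_iff_of_le hc.1.le).1 (hb (Ioo_subset_Ioc_self hc)).1
  have hgc_nonneg : 0 ≤ g c :=
    hgc ▸ div_nonneg (sub_nonneg.2 (hb (right_mem_Ioc.2 hxb)).2.2) (sub_pos.2 hxb).le
  exact hgc_neg.not_ge hgc_nonneg

theorem IsMinOn.degenerate_diffusion_nonneg {c d : ℝ} (hcd : c < d) {a a' f f' : ℝ → ℝ}
    {f'' x₀ : ℝ} (ha : ∀ x ∈ Icc c d, HasDerivWithinAt a (a' x) (Icc c d) x)
    (hac : a c = 0) (had : a d = 0) (hapos : ∀ x ∈ Ioo c d, 0 < a x)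
    (hf : ∀ x ∈ Icc c d, HasDerivWithinAt f (f' x) (Icc c d) x)
    (hf' : HasDerivWithinAt f' f'' (Icc c d) x₀) (hx₀ : x₀ ∈ Icc c d)
    (hmin : IsMinOn f (Icc c d) x₀) :
    0 ≤ a x₀ * f'' + a' x₀ * f' x₀ := by
  have endpoint :
      ∀ b ∈ Icc c d, b ≠ x₀ → a x₀ = 0 → 0 ≤ a x₀ * f'' + a' x₀ * f' x₀ := by
    intro b hb hbx₀ hax₀
    have hseg : segment ℝ x₀ b ⊆ Icc c d := (convex_Icc c d).segment_subset hx₀ hb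
    have hamin : IsMinOn a (Icc c d) x₀ := fun x hx => by
      show a x₀ ≤ a x
      rw [hax₀]
      rcases hx.1.eq_or_lt with rfl | hcx
      · exact hac.ge
      rcases hx.2.eq_or_lt with rfl | hxd
      · exact had.ge
      exact (hapos x ⟨hcx, hxd⟩).le
    have ha'_dir := hamin.hasDerivWithinAt_mul_sub_nonneg_s4 (ha x₀ hx₀) hseg
    have hf_dir := hmin.hasDerivWithinAt_mul_sub_nonneg_s4 (hf x₀ hx₀) hseg
    have hprod : 0 ≤ a' x₀ * f' x₀ * (b - x₀) ^ 2 :=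
      calc 0 ≤ a' x₀ * (b - x₀) * (f' x₀ * (b - x₀)) := mul_nonneg ha'_dir hf_dir
        _ = a' x₀ * f' x₀ * (b - x₀) ^ 2 := by ring
    rw [hax₀, zero_mul, zero_add]
    exact nonneg_of_mul_nonneg_left hprod (sq_pos_of_ne_zero (sub_ne_zero.2 hbx₀))
  rcases hx₀.1.eq_or_lt with rfl | hcx₀
  · exact endpoint d (right_mem_Icc.2 hcd.le) hcd.ne' hac
  rcases hx₀.2.eq_or_lt with rfl | hx₀d
  · exact endpoint c (left_mem_Icc.2 hcd.le) hcx₀.ne had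
  have hnhds : Icc c d ∈ 𝓝 x₀ := Icc_mem_nhds hcx₀ hx₀d
  have hlocmin : IsLocalMin f x₀ := hmin.isLocalMin hnhds
  have hfd : ∀ᶠ x in 𝓝 x₀, HasDerivAt f (f' x) x :=
    Filter.mem_of_superset (Ioo_mem_nhds hcx₀ hx₀d) fun x hx =>
      (hf x (Ioo_subset_Icc_self hx)).hasDerivAt (Icc_mem_nhds hx.1 hx.2)
  have hf'_zero : f' x₀ = 0 := hlocmin.hasDerivAt_eq_zero hfd.self_of_nhds
  have hf''_nonneg : 0 ≤ f'' :=
    hlocmin.second_deriv_nonneg hfd (hf'.hasDerivAt hnhds)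
  rw [hf'_zero, mul_zero, add_zero]
  exact mul_nonneg (hapos x₀ ⟨hcx₀, hx₀d⟩).le hf''_nonneg

theorem comparison_principle_general
    (l T q₀ : ℝ) (hl : 0 < l) (hq₀ : 0 < q₀)
    (a a' q : ℝ → ℝ)
    (ha : ∀ x ∈ Icc (0:ℝ) l, HasDerivWithinAt a (a' x) (Icc (0:ℝ) l) x)
    (ha0 : a 0 = 0) (hal : a l = 0)
    (hapos : ∀ x ∈ Ioo (0:ℝ) l, 0 < a x)
    (hq : ∀ x ∈ Icc (0:ℝ) l, q₀ ≤ q x)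
    (u ut ux uxx : ℝ → ℝ → ℝ)
    (hu : ContinuousOn (fun p : ℝ × ℝ => u p.1 p.2) (Icc (0:ℝ) l ×ˢ Icc (0:ℝ) T))
    (hut : ∀ x ∈ Icc (0:ℝ) l, ∀ t ∈ Ioc (0:ℝ) T,
      HasDerivWithinAt (fun τ => u x τ) (ut x t) (Icc (0:ℝ) T) t)
    (hux : ∀ x ∈ Icc (0:ℝ) l, ∀ t ∈ Ioc (0:ℝ) T,
      HasDerivWithinAt (fun s => u s t) (ux x t) (Icc (0:ℝ) l) x)
    (huxx : ∀ x ∈ Icc (0:ℝ) l, ∀ t ∈ Ioc (0:ℝ) T,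
      HasDerivWithinAt (fun s => ux s t) (uxx x t) (Icc (0:ℝ) l) x)
    (hL : ∀ x ∈ Icc (0:ℝ) l, ∀ t ∈ Ioc (0:ℝ) T,
      0 ≤ ut x t - (a x * uxx x t + a' x * ux x t) + q x * u x t)
    (hinit : ∀ x ∈ Icc (0:ℝ) l, 0 ≤ u x 0) :
    ∀ x ∈ Icc (0:ℝ) l, ∀ t ∈ Icc (0:ℝ) T, 0 ≤ u x t := by
  intro x hx t ht
  obtain ⟨⟨x₀, t₀⟩, ⟨hx₀, ht₀⟩, hmin⟩ :=
    (isCompact_Icc.prod isCompact_Icc).exists_isMinOn ⟨(x, t), hx, ht⟩ hu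
  suffices 0 ≤ u x₀ t₀ from this.trans (hmin (mk_mem_prod hx ht))
  by_contra! hneg
  have ht₀pos : 0 < t₀ := ht₀.1.lt_of_ne (by rintro rfl; linarith [hinit x₀ hx₀])
  have ht₀' : t₀ ∈ Ioc 0 T := ⟨ht₀pos, ht₀.2⟩
  have hut_nonpos : ut x₀ t₀ ≤ 0 := by
    have hseg : segment ℝ t₀ 0 ⊆ Icc 0 T :=
      (convex_Icc 0 T).segment_subset ht₀ (left_mem_Icc.2 (ht₀.1.trans ht₀.2))
    have hdir := IsMinOn.hasDerivWithinAt_mul_sub_nonneg_s4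
      (fun τ hτ => hmin (mk_mem_prod hx₀ hτ)) (hut x₀ hx₀ t₀ ht₀') hseg
    exact nonpos_of_mul_nonneg_left hdir (by linarith)
  have hdiffusion : 0 ≤ a x₀ * uxx x₀ t₀ + a' x₀ * ux x₀ t₀ :=
    IsMinOn.degenerate_diffusion_nonneg hl ha ha0 hal hapos (fun y hy => hux y hy t₀ ht₀')
      (huxx x₀ hx₀ t₀ ht₀') hx₀ fun y hy => hmin (mk_mem_prod hy ht₀)
  have hqu : q x₀ * u x₀ t₀ < 0 := mul_neg_of_pos_of_neg (hq₀.trans_le (hq x₀ hx₀)) hneg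
  linarith [hL x₀ hx₀ t₀ ht₀']

/-- Comparison principle used in the proof of Theorem 2.4: if the admissible function `v`
satisfies `𝓛v ≥ 0` on `[0,l] × (0,T]` and `v(·,0) ≥ 0`, then `v ≥ 0` on `Q̄`. -/
theorem comparison_principle
    (l T q₀ : ℝ) (hl : 0 < l) (hT : 0 < T) (hq₀ : 0 < q₀)
    (a a' q : ℝ → ℝ)
    (ha : ∀ x ∈ Icc (0:ℝ) l, HasDerivWithinAt a (a' x) (Icc (0:ℝ) l) x)
    (ha'c : ContinuousOn a' (Icc (0:ℝ) l))
    (ha0 : a 0 = 0) (hal : a l = 0)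
    (hapos : ∀ x ∈ Ioo (0:ℝ) l, 0 < a x)
    (hqc : ContinuousOn q (Icc (0:ℝ) l))
    (hq : ∀ x ∈ Icc (0:ℝ) l, q₀ ≤ q x)
    (u ut ux uxx : ℝ → ℝ → ℝ)
    (hu : ContinuousOn (fun p : ℝ × ℝ => u p.1 p.2) (Icc (0:ℝ) l ×ˢ Icc (0:ℝ) T))
    (hut : ∀ x ∈ Icc (0:ℝ) l, ∀ t ∈ Ioc (0:ℝ) T,
      HasDerivWithinAt (fun τ => u x τ) (ut x t) (Icc (0:ℝ) T) t)
    (hux : ∀ x ∈ Icc (0:ℝ) l, ∀ t ∈ Ioc (0:ℝ) T,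
      HasDerivWithinAt (fun s => u s t) (ux x t) (Icc (0:ℝ) l) x)
    (huxx : ∀ x ∈ Icc (0:ℝ) l, ∀ t ∈ Ioc (0:ℝ) T,
      HasDerivWithinAt (fun s => ux s t) (uxx x t) (Icc (0:ℝ) l) x)
    (hL : ∀ x ∈ Icc (0:ℝ) l, ∀ t ∈ Ioc (0:ℝ) T,
      0 ≤ ut x t - (a x * uxx x t + a' x * ux x t) + q x * u x t)
    (hinit : ∀ x ∈ Icc (0:ℝ) l, 0 ≤ u x 0) :
    ∀ x ∈ Icc (0:ℝ) l, ∀ t ∈ Icc (0:ℝ) T, 0 ≤ u x t :=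
  comparison_principle_general l T q₀ hl hq₀ a a' q ha ha0 hal hapos hq u ut ux uxx hu hut hux huxx
    hL hinit
end

section
/- A priori sup-norm estimate (Theorem 2.4): Let f : Q → ℝ be bounded, φ : [0,l] → ℝ bounded, and let u be an admissible function satisfying 𝓛u(x,t) = f(x,t) for every (x,t) ∈ [0,l] × (0,T] and u(x,0) = φ(x) for every x ∈ [0,l]. Then max_{(x,t) ∈ Q̄} |u(x,t)| ≤ max{ (1/q₀) · sup_Q |f| , sup_{x ∈ [0,l]} |φ(x)| }. -/
/-!
Since `a` vanishes at `x = 0` and `x = l`, no lateral boundary values are available. The maximum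
principle is run instead against the barrier `h x = ∫_{l/2}^x (s - l/2) / a s`, which satisfies
`(a h')' = 1` and `h ≥ 0`, and blows up logarithmically at both ends because `a` is Lipschitz and
vanishes there. With `K` the claimed bound and `σ = ±1`, `w = σ u - K` satisfies `𝓛w ≤ 0` and
`w(·,0) ≤ 0`. For `ε > 0`, the maximum of `w - ε h` over `[α, β] × [0, T]`, with `α, β` close to the
ends, is not attained on the lateral sides; at an interior maximum with `t > 0` one has `w_t ≥ 0`,
`w_x = ε h'` and `w_xx ≤ ε h''`, whence `q (w - ε h) ≤ ε`. So `w ≤ ε / q₀ + ε h`, and `ε → 0`.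
-/

open Set Filter Topology intervalIntegral

theorem IsLocalMaxOn.hasDerivWithinAt_nonneg {g : ℝ → ℝ} {s : Set ℝ} {c t d : ℝ}
    (hmax : IsLocalMaxOn g s t) (hd : HasDerivWithinAt g d s t) (hct : c < t)
    (hcs : Icc c t ⊆ s) : 0 ≤ d := by
  have hdir : c - t ∈ posTangentConeAt s t :=
    sub_mem_posTangentConeAt_of_segment_subset (by rwa [segment_symm, segment_eq_Icc hct.le])
  have := hmax.hasFDerivWithinAt_nonpos hd.hasFDerivWithinAt hdir
  simp only [ContinuousLinearMap.toSpanSingleton_apply, smul_eq_mul] at this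
  exact nonneg_of_mul_nonpos_right this (sub_neg.2 hct)

theorem IsLocalMax.hasDerivAt_deriv_nonpos {g g' : ℝ → ℝ} {x₀ D : ℝ} (hmax : IsLocalMax g x₀)
    (hg : ∀ᶠ x in 𝓝 x₀, HasDerivAt g (g' x) x) (hg' : HasDerivAt g' D x₀) : D ≤ 0 := by
  have hderiv : deriv g =ᶠ[𝓝 x₀] g' := hg.mono fun x hx => hx.deriv
  -- For `D > 0` the second derivative test makes `x₀` a local minimum too, so `g` is locally
  -- constant and `g'` vanishes near `x₀`.
  by_contra! hD
  have hmin : IsLocalMin g x₀ := isLocalMin_of_deriv_deriv_pos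
    (by rwa [hderiv.deriv_eq, hg'.deriv]) hmax.deriv_eq_zero hg.self_of_nhds.continuousAt
  have hconst : g =ᶠ[𝓝 x₀] fun _ => g x₀ := by
    filter_upwards [hmax, hmin] with x h₁ h₂ using le_antisymm h₁ h₂
  have hzero : g' =ᶠ[𝓝 x₀] fun _ => 0 := by
    filter_upwards [hderiv.symm.trans hconst.deriv] with x hx
    simpa using hx
  exact hD.ne' (hg'.unique ((hasDerivAt_const x₀ 0).congr_of_eventuallyEq hzero))

theorem IsMaxOn.parabolic_optimality {v vt vx vxx : ℝ → ℝ → ℝ} {α β T x₀ t₀ : ℝ}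
    (hmax : IsMaxOn (fun p : ℝ × ℝ => v p.1 p.2) (Icc α β ×ˢ Icc 0 T) (x₀, t₀))
    (hx₀ : x₀ ∈ Ioo α β) (ht₀ : t₀ ∈ Ioc 0 T)
    (hvt : HasDerivWithinAt (v x₀ ·) (vt x₀ t₀) (Icc 0 T) t₀)
    (hvx : ∀ᶠ x in 𝓝 x₀, HasDerivAt (v · t₀) (vx x t₀) x)
    (hvxx : HasDerivAt (vx · t₀) (vxx x₀ t₀) x₀) :
    0 ≤ vt x₀ t₀ ∧ vx x₀ t₀ = 0 ∧ vxx x₀ t₀ ≤ 0 := by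
  have htime : IsMaxOn (v x₀ ·) (Icc 0 T) t₀ := fun t ht =>
    hmax (show (x₀, t) ∈ _ from ⟨Ioo_subset_Icc_self hx₀, ht⟩)
  have hspace : IsLocalMax (v · t₀) x₀ :=
    IsMaxOn.isLocalMax (fun x hx => hmax (show (x, t₀) ∈ _ from ⟨hx, Ioc_subset_Icc_self ht₀⟩))
      (Icc_mem_nhds hx₀.1 hx₀.2)
  exact ⟨htime.localize.hasDerivWithinAt_nonneg hvt ht₀.1 (Icc_subset_Icc_right ht₀.2),
    hspace.hasDerivAt_eq_zero hvx.self_of_nhds, hspace.hasDerivAt_deriv_nonpos hvx hvxx⟩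

theorem tendsto_atTop_nhdsGT_zero_of_hasDerivAt_le {g g' : ℝ → ℝ} {r κ : ℝ} (hr : 0 < r)
    (hκ : 0 < κ) (hg : ∀ x ∈ Ioo 0 r, HasDerivAt g (g' x) x)
    (hle : ∀ x ∈ Ioo 0 r, g' x ≤ -κ / x) : Tendsto g (𝓝[>] 0) atTop := by
  have hanti : AntitoneOn (fun x => g x + κ * Real.log x) (Ioo 0 r) := by
    have hderiv : ∀ x ∈ Ioo 0 r,
        HasDerivAt (fun x => g x + κ * Real.log x) (g' x + κ * x⁻¹) x := fun x hx =>
      (hg x hx).add ((Real.hasDerivAt_log hx.1.ne').const_mul κ)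
    refine antitoneOn_of_hasDerivWithinAt_nonpos (f' := fun x => g' x + κ * x⁻¹)
      (convex_Ioo 0 r) (fun x hx => (hderiv x hx).continuousAt.continuousWithinAt) ?_ ?_ <;>
      rw [interior_Ioo]
    · exact fun x hx => (hderiv x hx).hasDerivWithinAt
    · intro x hx
      have := hle x hx
      rw [neg_div] at this
      rw [← div_eq_mul_inv]
      linarith
  have hlog : Tendsto (fun x => g (r / 2) + κ * Real.log (r / 2) + Real.log x * -κ) (𝓝[>] 0)
      atTop :=
    tendsto_atTop_add_const_left _ _
      (Real.tendsto_log_nhdsGT_zero.atBot_mul_const_of_neg (neg_neg_of_pos hκ))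
  refine tendsto_atTop_mono' _ ?_ hlog
  filter_upwards [Ioo_mem_nhdsGT (half_pos hr)] with x hx
  have := hanti ⟨hx.1, by linarith [hx.2]⟩ ⟨half_pos hr, by linarith⟩ hx.2.le
  linarith

theorem tendsto_atTop_nhdsLT_of_hasDerivAt_ge {g g' : ℝ → ℝ} {c r κ : ℝ} (hr : 0 < r)
    (hκ : 0 < κ) (hg : ∀ x ∈ Ioo (c - r) c, HasDerivAt g (g' x) x)
    (hge : ∀ x ∈ Ioo (c - r) c, κ / (c - x) ≤ g' x) : Tendsto g (𝓝[<] c) atTop := by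
  have hmem : ∀ y ∈ Ioo 0 r, c - y ∈ Ioo (c - r) c := fun y hy =>
    ⟨by linarith [hy.2], by linarith [hy.1]⟩
  have hreflect : Tendsto (fun y => g (c - y)) (𝓝[>] 0) atTop := by
    refine tendsto_atTop_nhdsGT_zero_of_hasDerivAt_le hr hκ (g' := fun y => -g' (c - y))
      (fun y hy => ?_) (fun y hy => ?_)
    · exact (hg _ (hmem y hy)).comp y ((hasDerivAt_id y).const_sub c) |>.congr_deriv (by simp)
    · have := hge _ (hmem y hy)
      rw [sub_sub_cancel] at this
      rw [neg_div]
      linarith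
  have hmap : Tendsto (fun x => c - x) (𝓝[<] c) (𝓝[>] 0) := by
    refine tendsto_nhdsWithin_of_tendsto_nhds_of_eventually_within _ ?_ ?_
    · exact tendsto_nhdsWithin_of_tendsto_nhds
        ((continuous_const.sub continuous_id).tendsto' c 0 (sub_self c))
    · filter_upwards [self_mem_nhdsWithin] with x (hx : x < c) using sub_pos.2 hx
  simpa [Function.comp_def] using hreflect.comp hmap

structure IsDegenerateBarrier (a a' : ℝ → ℝ) (l : ℝ) (h h' h'' : ℝ → ℝ) : Prop where
  hasDerivAt : ∀ x ∈ Ioo 0 l, HasDerivAt h (h' x) x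
  hasDerivAt_deriv : ∀ x ∈ Ioo 0 l, HasDerivAt h' (h'' x) x
  flux_deriv_le_one : ∀ x ∈ Ioo 0 l, a x * h'' x + a' x * h' x ≤ 1
  nonneg : ∀ x ∈ Ioo 0 l, 0 ≤ h x
  tendsto_nhdsGT : Tendsto h (𝓝[>] 0) atTop
  tendsto_nhdsLT : Tendsto h (𝓝[<] l) atTop

theorem IsDegenerateBarrier.continuousOn {a a' h h' h'' : ℝ → ℝ} {l : ℝ}
    (hbar : IsDegenerateBarrier a a' l h h' h'') : ContinuousOn h (Ioo 0 l) :=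
  fun x hx => (hbar.hasDerivAt x hx).continuousAt.continuousWithinAt

noncomputable def degenerateBarrier (a : ℝ → ℝ) (l x : ℝ) : ℝ :=
  ∫ s in l / 2..x, (s - l / 2) / a s

section DegenerateBarrier

variable {a a' : ℝ → ℝ} {l : ℝ}

theorem hasDerivAt_degenerateBarrier (hac : ContinuousOn a (Ioo 0 l))
    (hapos : ∀ x ∈ Ioo 0 l, 0 < a x) {x : ℝ} (hx : x ∈ Ioo 0 l) :
    HasDerivAt (degenerateBarrier a l) ((x - l / 2) / a x) x := by
  have hcont : ContinuousOn (fun s => (s - l / 2) / a s) (Ioo 0 l) :=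
    (continuousOn_id.sub continuousOn_const).div hac fun s hs => (hapos s hs).ne'
  have hmid : l / 2 ∈ Ioo 0 l := ⟨by linarith [hx.1, hx.2], by linarith [hx.1, hx.2]⟩
  exact integral_hasDerivAt_right
    (hcont.mono (ordConnected_Ioo.uIcc_subset hmid hx)).intervalIntegrable
    (hcont.stronglyMeasurableAtFilter isOpen_Ioo x hx)
    (hcont.continuousAt (isOpen_Ioo.mem_nhds hx))

theorem degenerateBarrier_nonneg (hapos : ∀ x ∈ Ioo 0 l, 0 < a x) {x : ℝ} (hx : x ∈ Ioo 0 l) :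
    0 ≤ degenerateBarrier a l x := by
  have hmem : ∀ s ∈ uIcc (l / 2) x, s ∈ Ioo 0 l := fun s hs =>
    ordConnected_Ioo.uIcc_subset ⟨by linarith [hx.1, hx.2], by linarith [hx.1, hx.2]⟩ hx hs
  rcases le_total (l / 2) x with hle | hle
  · refine integral_nonneg hle fun s hs => div_nonneg (by linarith [hs.1]) (hapos s ?_).le
    exact hmem s (Icc_subset_uIcc hs)
  · rw [degenerateBarrier, integral_symm, ← integral_neg]
    refine integral_nonneg hle fun s hs =>
      neg_nonneg.2 (div_nonpos_of_nonpos_of_nonneg (by linarith [hs.2]) (hapos s ?_).le)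
    exact hmem s (uIcc_comm x _ ▸ Icc_subset_uIcc hs)

theorem exists_le_mul_of_eq_zero_endpoints
    (ha : ∀ x ∈ Icc 0 l, HasDerivWithinAt a (a' x) (Icc 0 l) x) (ha'c : ContinuousOn a' (Icc 0 l))
    (ha0 : a 0 = 0) (hal : a l = 0) :
    ∃ L > 0, ∀ x ∈ Icc 0 l, a x ≤ L * x ∧ a x ≤ L * (l - x) := by
  obtain ⟨L₀, hL₀⟩ := isCompact_Icc.exists_bound_of_continuousOn ha'c
  have hlip : ∀ x ∈ Icc 0 l, ∀ y ∈ Icc 0 l, ‖a y - a x‖ ≤ max L₀ 1 * ‖y - x‖ :=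
    fun x hx y hy => (convex_Icc 0 l).norm_image_sub_le_of_norm_hasDerivWithin_le ha
      (fun z hz => (hL₀ z hz).trans (le_max_left _ _)) hx hy
  refine ⟨max L₀ 1, by positivity, fun x hx => ⟨?_, ?_⟩⟩
  · have := hlip 0 (left_mem_Icc.2 (hx.1.trans hx.2)) x hx
    rw [ha0, sub_zero, sub_zero, Real.norm_eq_abs, Real.norm_eq_abs, abs_of_nonneg hx.1] at this
    exact (le_abs_self _).trans this
  · have := hlip l (right_mem_Icc.2 (hx.1.trans hx.2)) x hx
    rw [hal, sub_zero, Real.norm_eq_abs, Real.norm_eq_abs, abs_sub_comm,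
      abs_of_nonneg (sub_nonneg.2 hx.2)] at this
    exact (le_abs_self _).trans this

theorem isDegenerateBarrier_degenerateBarrier (hl : 0 < l)
    (ha : ∀ x ∈ Icc 0 l, HasDerivWithinAt a (a' x) (Icc 0 l) x) (ha'c : ContinuousOn a' (Icc 0 l))
    (ha0 : a 0 = 0) (hal : a l = 0) (hapos : ∀ x ∈ Ioo 0 l, 0 < a x) :
    IsDegenerateBarrier a a' l (degenerateBarrier a l) (fun x => (x - l / 2) / a x)
      (fun x => (a x - (x - l / 2) * a' x) / a x ^ 2) := by
  have hderiv_a : ∀ x ∈ Ioo 0 l, HasDerivAt a (a' x) x := fun x hx =>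
    (ha x (Ioo_subset_Icc_self hx)).hasDerivAt (Icc_mem_nhds hx.1 hx.2)
  have hderiv : ∀ x ∈ Ioo 0 l, HasDerivAt (degenerateBarrier a l) ((x - l / 2) / a x) x :=
    fun x hx => hasDerivAt_degenerateBarrier
      (fun y hy => (hderiv_a y hy).continuousAt.continuousWithinAt) hapos hx
  obtain ⟨L, hL, hbound⟩ := exists_le_mul_of_eq_zero_endpoints ha ha'c ha0 hal
  refine ⟨hderiv, fun x hx => ?_, fun x hx => ?_, fun x hx => degenerateBarrier_nonneg hapos hx,
    ?_, ?_⟩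
  · have := ((hasDerivAt_id x).sub_const (l / 2)).div (hderiv_a x hx) (hapos x hx).ne'
    simp only [one_mul] at this
    exact this
  · have := (hapos x hx).ne'
    refine le_of_eq ?_
    field_simp
    ring
  · refine tendsto_atTop_nhdsGT_zero_of_hasDerivAt_le (r := l / 4) (κ := l / (4 * L))
      (by positivity) (by positivity) (fun x hx => hderiv x ⟨hx.1, by linarith [hx.2]⟩)
      fun x hx => ?_
    have hxl : x ∈ Ioo 0 l := ⟨hx.1, by linarith [hx.2]⟩
    have hax := (hbound x (Ioo_subset_Icc_self hxl)).1
    rw [div_le_div_iff₀ (hapos x hxl) hx.1]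
    field_simp
    nlinarith [mul_le_mul_of_nonneg_left hax (by positivity : (0:ℝ) ≤ 2 * l),
      mul_neg_of_pos_of_neg (mul_pos hx.1 hL) (by linarith [hx.2] : 4 * x - l < 0)]
  · refine tendsto_atTop_nhdsLT_of_hasDerivAt_ge (r := l / 4) (κ := l / (4 * L))
      (by positivity) (by positivity) (fun x hx => hderiv x ⟨by linarith [hx.1], hx.2⟩)
      fun x hx => ?_
    have hxl : x ∈ Ioo 0 l := ⟨by linarith [hx.1], hx.2⟩
    have hax := (hbound x (Ioo_subset_Icc_self hxl)).2
    rw [div_le_div_iff₀ (sub_pos.2 hx.2) (hapos x hxl)]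
    field_simp
    nlinarith [mul_le_mul_of_nonneg_left hax (by positivity : (0:ℝ) ≤ 2 * l),
      mul_pos (mul_pos (sub_pos.2 hx.2) hL) (by linarith [hx.1] : 0 < 4 * x - 3 * l)]

end DegenerateBarrier

structure IsClassicalSolution (l T : ℝ) (a a' q : ℝ → ℝ) (u ut ux uxx f : ℝ → ℝ → ℝ) : Prop where
  continuousOn : ContinuousOn (fun p : ℝ × ℝ => u p.1 p.2) (Icc 0 l ×ˢ Icc 0 T)
  hasDerivWithinAt_t :
    ∀ x ∈ Ioo 0 l, ∀ t ∈ Ioc 0 T, HasDerivWithinAt (u x ·) (ut x t) (Icc 0 T) t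
  hasDerivAt_x : ∀ x ∈ Ioo 0 l, ∀ t ∈ Ioc 0 T, HasDerivAt (u · t) (ux x t) x
  hasDerivAt_xx : ∀ x ∈ Ioo 0 l, ∀ t ∈ Ioc 0 T, HasDerivAt (ux · t) (uxx x t) x
  pde : ∀ x ∈ Ioo 0 l, ∀ t ∈ Ioc 0 T,
    ut x t - (a x * uxx x t + a' x * ux x t) + q x * u x t = f x t

namespace IsClassicalSolution

variable {l T : ℝ} {a a' q : ℝ → ℝ} {u ut ux uxx f : ℝ → ℝ → ℝ}

theorem const_mul_sub_const (hu : IsClassicalSolution l T a a' q u ut ux uxx f) (σ K : ℝ) :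
    IsClassicalSolution l T a a' q (fun x t => σ * u x t - K) (fun x t => σ * ut x t)
      (fun x t => σ * ux x t) (fun x t => σ * uxx x t) (fun x t => σ * f x t - q x * K) where
  continuousOn := (continuousOn_const.mul hu.continuousOn).sub continuousOn_const
  hasDerivWithinAt_t x hx t ht := ((hu.hasDerivWithinAt_t x hx t ht).const_mul σ).sub_const K
  hasDerivAt_x x hx t ht := ((hu.hasDerivAt_x x hx t ht).const_mul σ).sub_const K
  hasDerivAt_xx x hx t ht := (hu.hasDerivAt_xx x hx t ht).const_mul σ
  pde x hx t ht := by linear_combination σ * hu.pde x hx t ht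

variable {h h' h'' : ℝ → ℝ}

theorem mul_sub_barrier_le_of_isMaxOn (hu : IsClassicalSolution l T a a' q u ut ux uxx f)
    (hbar : IsDegenerateBarrier a a' l h h' h'') (ha : ∀ x ∈ Ioo 0 l, 0 ≤ a x)
    (hq : ∀ x ∈ Ioo 0 l, 0 ≤ q x) {ε α β x₀ t₀ : ℝ} (hε : 0 ≤ ε) (hαβ : Icc α β ⊆ Ioo 0 l)
    (hmax : IsMaxOn (fun p : ℝ × ℝ => u p.1 p.2 - ε * h p.1) (Icc α β ×ˢ Icc 0 T) (x₀, t₀))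
    (hx₀ : x₀ ∈ Ioo α β) (ht₀ : t₀ ∈ Ioc 0 T) :
    q x₀ * (u x₀ t₀ - ε * h x₀) ≤ f x₀ t₀ + ε := by
  have hx₀' : x₀ ∈ Ioo 0 l := hαβ (Ioo_subset_Icc_self hx₀)
  obtain ⟨hut, hux, huxx⟩ := hmax.parabolic_optimality (v := fun x t => u x t - ε * h x)
    (vx := fun x t => ux x t - ε * h' x) (vxx := fun x t => uxx x t - ε * h'' x) hx₀ ht₀
    ((hu.hasDerivWithinAt_t x₀ hx₀' t₀ ht₀).sub_const _)
    (by
      filter_upwards [isOpen_Ioo.mem_nhds hx₀'] with x hx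
      exact (hu.hasDerivAt_x x hx t₀ ht₀).sub ((hbar.hasDerivAt x hx).const_mul ε))
    ((hu.hasDerivAt_xx x₀ hx₀' t₀ ht₀).sub ((hbar.hasDerivAt_deriv x₀ hx₀').const_mul ε))
  have hpde := hu.pde x₀ hx₀' t₀ ht₀
  rw [sub_eq_zero.1 hux] at hpde
  have hflux := hbar.flux_deriv_le_one x₀ hx₀'
  linarith [mul_nonneg (ha x₀ hx₀') (neg_nonneg.2 huxx),
    mul_nonneg (hq x₀ hx₀') (mul_nonneg hε (hbar.nonneg x₀ hx₀')),
    mul_le_mul_of_nonneg_left hflux hε]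

theorem sub_mul_barrier_le (hu : IsClassicalSolution l T a a' q u ut ux uxx f)
    (hbar : IsDegenerateBarrier a a' l h h' h'') (ha : ∀ x ∈ Ioo 0 l, 0 ≤ a x) {q₀ : ℝ}
    (hq₀ : 0 < q₀) (hq : ∀ x ∈ Ioo 0 l, q₀ ≤ q x)
    (hf : ∀ x ∈ Ioo 0 l, ∀ t ∈ Ioc 0 T, f x t ≤ 0) (hu₀ : ∀ x ∈ Icc 0 l, u x 0 ≤ 0) {ε : ℝ}
    (hε : 0 < ε) {x t : ℝ} (hx : x ∈ Ioo 0 l)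
    (ht : t ∈ Icc 0 T) : u x t - ε * h x ≤ ε / q₀ := by
  obtain ⟨W, hW⟩ := (isCompact_Icc.prod isCompact_Icc).bddAbove_image hu.continuousOn
  have hside : ∀ y ∈ Ioo 0 l, W / ε ≤ h y → ∀ s ∈ Icc 0 T, u y s - ε * h y ≤ ε / q₀ :=
    fun y hy hWy s hs => by
      have := hW ⟨(y, s), ⟨Ioo_subset_Icc_self hy, hs⟩, rfl⟩
      rw [div_le_iff₀ hε] at hWy
      linarith [div_pos hε hq₀]
  obtain ⟨α, hWα, hα⟩ :=
    ((hbar.tendsto_nhdsGT.eventually_ge_atTop (W / ε)).and (Ioo_mem_nhdsGT hx.1)).exists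
  obtain ⟨β, hWβ, hβ⟩ :=
    ((hbar.tendsto_nhdsLT.eventually_ge_atTop (W / ε)).and (Ioo_mem_nhdsLT hx.2)).exists
  have hαβ : Icc α β ⊆ Ioo 0 l := Icc_subset_Ioo hα.1 hβ.2
  have hcont : ContinuousOn (fun p : ℝ × ℝ => u p.1 p.2 - ε * h p.1) (Icc α β ×ˢ Icc 0 T) :=
    (hu.continuousOn.mono (prod_mono (hαβ.trans Ioo_subset_Icc_self) subset_rfl)).sub
      (continuousOn_const.mul (hbar.continuousOn.comp continuousOn_fst fun p hp => hαβ hp.1))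
  have hxt : (x, t) ∈ Icc α β ×ˢ Icc 0 T := ⟨⟨hα.2.le, hβ.1.le⟩, ht⟩
  obtain ⟨⟨x₀, t₀⟩, ⟨hx₀, ht₀⟩, hmax⟩ :=
    (isCompact_Icc.prod isCompact_Icc).exists_isMaxOn ⟨_, hxt⟩ hcont
  refine (hmax hxt).trans ?_
  rcases eq_endpoints_or_mem_Ioo_of_mem_Icc hx₀ with rfl | rfl | hx₀
  · exact hside _ (hαβ hx₀) hWα t₀ ht₀
  · exact hside _ (hαβ hx₀) hWβ t₀ ht₀
  have hx₀' : x₀ ∈ Ioo 0 l := hαβ (Ioo_subset_Icc_self hx₀)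
  rcases eq_or_lt_of_le ht₀.1 with rfl | ht₀pos
  · have := mul_nonneg hε.le (hbar.nonneg x₀ hx₀')
    linarith [hu₀ x₀ (Ioo_subset_Icc_self hx₀'), div_pos hε hq₀]
  have hmul := hu.mul_sub_barrier_le_of_isMaxOn hbar ha (fun y hy => hq₀.le.trans (hq y hy))
    hε.le hαβ hmax hx₀ ⟨ht₀pos, ht₀.2⟩
  show u x₀ t₀ - ε * h x₀ ≤ ε / q₀
  rcases le_or_gt (u x₀ t₀ - ε * h x₀) 0 with hneg | hpos
  · linarith [div_pos hε hq₀]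
  · rw [le_div_iff₀ hq₀]
    nlinarith [hq x₀ hx₀', hf x₀ hx₀' t₀ ⟨ht₀pos, ht₀.2⟩]

theorem nonpos_of_forcing_nonpos (hu : IsClassicalSolution l T a a' q u ut ux uxx f)
    (hl : 0 < l) (hbar : IsDegenerateBarrier a a' l h h' h'') (ha : ∀ x ∈ Ioo 0 l, 0 ≤ a x)
    {q₀ : ℝ} (hq₀ : 0 < q₀) (hq : ∀ x ∈ Ioo 0 l, q₀ ≤ q x)
    (hf : ∀ x ∈ Ioo 0 l, ∀ t ∈ Ioc 0 T, f x t ≤ 0)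
    (hu₀ : ∀ x ∈ Icc 0 l, u x 0 ≤ 0) : ∀ x ∈ Icc 0 l, ∀ t ∈ Icc 0 T, u x t ≤ 0 := by
  have hinterior : ∀ x ∈ Ioo 0 l, ∀ t ∈ Icc 0 T, u x t ≤ 0 := by
    intro x hx t ht
    refine le_of_forall_pos_le_add fun η hη => ?_
    set c := 1 / q₀ + h x with hc_def
    have hc : 0 < c := add_pos_of_pos_of_nonneg (by positivity) (hbar.nonneg x hx)
    have := hu.sub_mul_barrier_le hbar ha hq₀ hq hf hu₀ (div_pos hη hc) hx ht
    calc u x t ≤ η / c / q₀ + η / c * h x := by linarith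
      _ = η / c * c := by ring
      _ = 0 + η := by rw [div_mul_cancel₀ η hc.ne', zero_add]
  intro x hx t ht
  have hslice : ContinuousOn (u · t) (Icc 0 l) :=
    hu.continuousOn.comp (continuousOn_id.prodMk continuousOn_const) fun y hy => ⟨hy, ht⟩
  rw [← closure_Ioo hl.ne] at hx hslice
  exact le_on_closure (fun y hy => hinterior y hy t ht) hslice continuousOn_const hx

theorem abs_le (hu : IsClassicalSolution l T a a' q u ut ux uxx f) (hl : 0 < l)
    (hbar : IsDegenerateBarrier a a' l h h' h'') (ha : ∀ x ∈ Ioo 0 l, 0 ≤ a x) {q₀ K : ℝ}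
    (hq₀ : 0 < q₀) (hq : ∀ x ∈ Ioo 0 l, q₀ ≤ q x) (hK : 0 ≤ K)
    (hf : ∀ x ∈ Ioo 0 l, ∀ t ∈ Ioc 0 T, |f x t| ≤ q₀ * K) (hu₀ : ∀ x ∈ Icc 0 l, |u x 0| ≤ K) :
    ∀ x ∈ Icc 0 l, ∀ t ∈ Icc 0 T, |u x t| ≤ K := by
  have hbound : ∀ σ : ℝ, |σ| = 1 → ∀ x ∈ Icc 0 l, ∀ t ∈ Icc 0 T, σ * u x t - K ≤ 0 := by
    intro σ hσ
    have hσmul : ∀ r : ℝ, σ * r ≤ |r| := fun r => by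
      simpa [abs_mul, hσ] using le_abs_self (σ * r)
    refine (hu.const_mul_sub_const σ K).nonpos_of_forcing_nonpos hl hbar ha hq₀ hq
      (fun x hx t ht => ?_) (fun x hx => by linarith [hσmul (u x 0), hu₀ x hx])
    nlinarith [hσmul (f x t), hf x hx t ht, hq x hx]
  intro x hx t ht
  have hup := hbound 1 (by simp) x hx t ht
  have hdown := hbound (-1) (by simp) x hx t ht
  exact _root_.abs_le.2 ⟨by linarith, by linarith⟩

end IsClassicalSolution

theorem sup_norm_estimate_general
    (l T q₀ : ℝ) (hl : 0 < l) (hq₀ : 0 < q₀)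
    (a a' q : ℝ → ℝ)
    (ha : ∀ x ∈ Icc (0:ℝ) l, HasDerivWithinAt a (a' x) (Icc (0:ℝ) l) x)
    (ha'c : ContinuousOn a' (Icc (0:ℝ) l))
    (ha0 : a 0 = 0) (hal : a l = 0)
    (hapos : ∀ x ∈ Ioo (0:ℝ) l, 0 < a x)
    (hq : ∀ x ∈ Icc (0:ℝ) l, q₀ ≤ q x)
    (u ut ux uxx : ℝ → ℝ → ℝ)
    (hu : ContinuousOn (fun p : ℝ × ℝ => u p.1 p.2) (Icc (0:ℝ) l ×ˢ Icc (0:ℝ) T))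
    (hut : ∀ x ∈ Icc (0:ℝ) l, ∀ t ∈ Ioc (0:ℝ) T,
      HasDerivWithinAt (fun τ => u x τ) (ut x t) (Icc (0:ℝ) T) t)
    (hux : ∀ x ∈ Icc (0:ℝ) l, ∀ t ∈ Ioc (0:ℝ) T,
      HasDerivWithinAt (fun s => u s t) (ux x t) (Icc (0:ℝ) l) x)
    (huxx : ∀ x ∈ Icc (0:ℝ) l, ∀ t ∈ Ioc (0:ℝ) T,
      HasDerivWithinAt (fun s => ux s t) (uxx x t) (Icc (0:ℝ) l) x)
    (f : ℝ → ℝ → ℝ) (φ : ℝ → ℝ)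
    (hfb : ∃ M, ∀ x ∈ Ioo (0:ℝ) l, ∀ t ∈ Ioc (0:ℝ) T, |f x t| ≤ M)
    (hφb : ∃ M, ∀ x ∈ Icc (0:ℝ) l, |φ x| ≤ M)
    (hL : ∀ x ∈ Icc (0:ℝ) l, ∀ t ∈ Ioc (0:ℝ) T,
      ut x t - (a x * uxx x t + a' x * ux x t) + q x * u x t = f x t)
    (hinit : ∀ x ∈ Icc (0:ℝ) l, u x 0 = φ x) :
    ∀ x ∈ Icc (0:ℝ) l, ∀ t ∈ Icc (0:ℝ) T,
      |u x t| ≤ max ((1 / q₀) * sSup ((fun p : ℝ × ℝ => |f p.1 p.2|) '' (Ioo (0:ℝ) l ×ˢ Ioc (0:ℝ) T)))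
        (sSup ((fun x => |φ x|) '' Icc (0:ℝ) l)) := by
  obtain ⟨Mf, hMf⟩ := hfb
  obtain ⟨Mφ, hMφ⟩ := hφb
  set F := sSup ((fun p : ℝ × ℝ => |f p.1 p.2|) '' (Ioo (0:ℝ) l ×ˢ Ioc (0:ℝ) T))
  set Φ := sSup ((fun x => |φ x|) '' Icc (0:ℝ) l)
  have hF : ∀ x ∈ Ioo 0 l, ∀ t ∈ Ioc 0 T, |f x t| ≤ F := fun x hx t ht =>
    le_csSup ⟨Mf, by rintro _ ⟨p, hp, rfl⟩; exact hMf _ hp.1 _ hp.2⟩ ⟨(x, t), ⟨hx, ht⟩, rfl⟩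
  have hΦ : ∀ x ∈ Icc 0 l, |φ x| ≤ Φ := fun x hx =>
    le_csSup ⟨Mφ, by rintro _ ⟨y, hy, rfl⟩; exact hMφ y hy⟩ ⟨x, hx, rfl⟩
  have hFK : F ≤ q₀ * max (1 / q₀ * F) Φ := by
    calc F = q₀ * (1 / q₀ * F) := by field_simp
      _ ≤ q₀ * max (1 / q₀ * F) Φ := mul_le_mul_of_nonneg_left (le_max_left _ _) hq₀.le
  have hsol : IsClassicalSolution l T a a' q u ut ux uxx f :=
    { continuousOn := hu
      hasDerivWithinAt_t := fun x hx => hut x (Ioo_subset_Icc_self hx)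
      hasDerivAt_x := fun x hx t ht =>
        (hux x (Ioo_subset_Icc_self hx) t ht).hasDerivAt (Icc_mem_nhds hx.1 hx.2)
      hasDerivAt_xx := fun x hx t ht =>
        (huxx x (Ioo_subset_Icc_self hx) t ht).hasDerivAt (Icc_mem_nhds hx.1 hx.2)
      pde := fun x hx => hL x (Ioo_subset_Icc_self hx) }
  refine hsol.abs_le hl (isDegenerateBarrier_degenerateBarrier hl ha ha'c ha0 hal hapos)
    (fun x hx => (hapos x hx).le) hq₀ (fun x hx => hq x (Ioo_subset_Icc_self hx))
    (((abs_nonneg _).trans (hΦ 0 ⟨le_rfl, hl.le⟩)).trans (le_max_right _ _))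
    (fun x hx t ht => (hF x hx t ht).trans hFK) fun x hx => ?_
  rw [hinit x hx]
  exact (hΦ x hx).trans (le_max_right _ _)

/-- A priori sup-norm estimate (Theorem 2.4): if the admissible `u` solves `𝓛u = f` on
`[0,l] × (0,T]` with `u(·,0) = φ`, `f` bounded and `φ` bounded, then
`max_{Q̄} |u| ≤ max{(1/q₀)·sup_Q |f|, sup_{[0,l]} |φ|}`. -/
theorem sup_norm_estimate
    (l T q₀ : ℝ) (hl : 0 < l) (hT : 0 < T) (hq₀ : 0 < q₀)
    (a a' q : ℝ → ℝ)
    (ha : ∀ x ∈ Icc (0:ℝ) l, HasDerivWithinAt a (a' x) (Icc (0:ℝ) l) x)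
    (ha'c : ContinuousOn a' (Icc (0:ℝ) l))
    (ha0 : a 0 = 0) (hal : a l = 0)
    (hapos : ∀ x ∈ Ioo (0:ℝ) l, 0 < a x)
    (hqc : ContinuousOn q (Icc (0:ℝ) l))
    (hq : ∀ x ∈ Icc (0:ℝ) l, q₀ ≤ q x)
    (u ut ux uxx : ℝ → ℝ → ℝ)
    (hu : ContinuousOn (fun p : ℝ × ℝ => u p.1 p.2) (Icc (0:ℝ) l ×ˢ Icc (0:ℝ) T))
    (hut : ∀ x ∈ Icc (0:ℝ) l, ∀ t ∈ Ioc (0:ℝ) T,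
      HasDerivWithinAt (fun τ => u x τ) (ut x t) (Icc (0:ℝ) T) t)
    (hux : ∀ x ∈ Icc (0:ℝ) l, ∀ t ∈ Ioc (0:ℝ) T,
      HasDerivWithinAt (fun s => u s t) (ux x t) (Icc (0:ℝ) l) x)
    (huxx : ∀ x ∈ Icc (0:ℝ) l, ∀ t ∈ Ioc (0:ℝ) T,
      HasDerivWithinAt (fun s => ux s t) (uxx x t) (Icc (0:ℝ) l) x)
    (f : ℝ → ℝ → ℝ) (φ : ℝ → ℝ)
    (hfb : ∃ M, ∀ x ∈ Ioo (0:ℝ) l, ∀ t ∈ Ioc (0:ℝ) T, |f x t| ≤ M)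
    (hφb : ∃ M, ∀ x ∈ Icc (0:ℝ) l, |φ x| ≤ M)
    (hL : ∀ x ∈ Icc (0:ℝ) l, ∀ t ∈ Ioc (0:ℝ) T,
      ut x t - (a x * uxx x t + a' x * ux x t) + q x * u x t = f x t)
    (hinit : ∀ x ∈ Icc (0:ℝ) l, u x 0 = φ x) :
    ∀ x ∈ Icc (0:ℝ) l, ∀ t ∈ Icc (0:ℝ) T,
      |u x t| ≤ max ((1 / q₀) * sSup ((fun p : ℝ × ℝ => |f p.1 p.2|) '' (Ioo (0:ℝ) l ×ˢ Ioc (0:ℝ) T)))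
        (sSup ((fun x => |φ x|) '' Icc (0:ℝ) l)) :=
  sup_norm_estimate_general l T q₀ hl hq₀ a a' q ha ha'c ha0 hal hapos hq u ut ux uxx hu hut hux
    huxx f φ hfb hφb hL hinit
end

section
/- Backward sup-norm estimate (Lemma 5.3, classical form): Let ψ : [0,l] → ℝ be bounded, and let v be a function continuous on Q̄ whose partial derivatives v_t, v_x, v_{xx} exist at every point of [0,l] × [0,T) (one-sided at boundary points), satisfying the backward equation −v_t − (a(x)v_x)_x + q(x)v = 0 for every (x,t) ∈ [0,l] × [0,T) and the terminal condition v(x,T) = ψ(x) for every x ∈ [0,l]. Then max_{(x,t) ∈ Q̄} |v(x,t)| ≤ sup_{x ∈ [0,l]} |ψ(x)|. -/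
/-!
At a maximum of `v` over `[0,l] × [0,T]` that is not on the terminal slice `t = T`, the one-sided
time derivative gives `v_t ≤ 0`, and the flux term gives `(a v_x)_x ≤ 0`: in the interior because
`v_x = 0` and `v_xx ≤ 0`, at an endpoint because `a` vanishes there, so that `(a v_x)_x = a' v_x`,
and `a'` and `v_x` have opposite signs. The equation then forces `q v ≤ 0` there, hence `v ≤ 0`
since `q > 0`. So `v` is bounded above by `max (0, sup ψ)`; applying this to `-v` bounds `|v|`.
-/

open Set Filter Topology

section OneVariable

variable {f f' : ℝ → ℝ} {d A B x₀ : ℝ}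

theorem IsLocalMaxOn.hasDerivWithinAt_Icc_nonpos (h : IsLocalMaxOn f (Icc A B) x₀)
    (hf : HasDerivWithinAt f d (Icc A B) x₀) (hA : A ≤ x₀) (hB : x₀ < B) : d ≤ 0 := by
  have hcone : B - x₀ ∈ posTangentConeAt (Icc A B) x₀ :=
    sub_mem_posTangentConeAt_of_segment_subset
      ((segment_eq_Icc hB.le).trans_subset (Icc_subset_Icc_left hA))
  exact nonpos_of_mul_nonpos_right
    (by simpa using h.hasFDerivWithinAt_nonpos hf.hasFDerivWithinAt hcone) (sub_pos.2 hB)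

theorem IsLocalMaxOn.hasDerivWithinAt_Icc_nonneg (h : IsLocalMaxOn f (Icc A B) x₀)
    (hf : HasDerivWithinAt f d (Icc A B) x₀) (hA : A < x₀) (hB : x₀ ≤ B) : 0 ≤ d := by
  have hcone : A - x₀ ∈ posTangentConeAt (Icc A B) x₀ :=
    sub_mem_posTangentConeAt_of_segment_subset
      (((segment_symm ℝ x₀ A).trans (segment_eq_Icc hA.le)).trans_subset
        (Icc_subset_Icc_right hB))
  exact nonneg_of_mul_nonpos_right
    (by simpa using h.hasFDerivWithinAt_nonpos hf.hasFDerivWithinAt hcone) (sub_neg.2 hA)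

theorem IsLocalMax.hasDerivAt_deriv_nonpos_s8 (h : IsLocalMax f x₀)
    (hf : ∀ᶠ x in 𝓝 x₀, HasDerivAt f (f' x) x) (hf' : HasDerivAt f' d x₀) : d ≤ 0 := by
  -- If `d > 0`, the second-derivative test makes `x₀` a local minimum as well, so `f` is
  -- locally constant and `d = 0`.
  by_contra! hd
  have hdd : HasDerivAt (deriv f) d x₀ :=
    hf'.congr_of_eventuallyEq (hf.mono fun x hx => hx.deriv)
  have hmin : IsLocalMin f x₀ :=
    isLocalMin_of_deriv_deriv_pos (hdd.deriv ▸ hd) h.deriv_eq_zero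
      hf.self_of_nhds.continuousAt
  have hconst : f =ᶠ[𝓝 x₀] fun _ => f x₀ :=
    (h.and hmin).mono fun x hx => le_antisymm hx.1 hx.2
  have hdd0 : HasDerivAt (deriv f) 0 x₀ :=
    (hasDerivAt_const x₀ (0 : ℝ)).congr_of_eventuallyEq (hconst.deriv.trans (by simp))
  exact hd.ne' (hdd.unique hdd0)

end OneVariable

theorem IsMaxOn.flux_deriv_nonpos {a u u' : ℝ → ℝ} {a' u'' A B x₀ : ℝ}
    (hmax : IsMaxOn u (Icc A B) x₀) (hx₀ : x₀ ∈ Icc A B) (hAB : A < B)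
    (ha : HasDerivWithinAt a a' (Icc A B) x₀) (haA : a A = 0) (haB : a B = 0)
    (ha_nonneg : ∀ x ∈ Icc A B, 0 ≤ a x)
    (hu : ∀ x ∈ Icc A B, HasDerivWithinAt u (u' x) (Icc A B) x)
    (hu' : HasDerivWithinAt u' u'' (Icc A B) x₀) :
    a x₀ * u'' + a' * u' x₀ ≤ 0 := by
  have hneg_a_max : ∀ y, a y = 0 → IsMaxOn (fun x => -a x) (Icc A B) y := fun y hy =>
    IsMinOn.neg fun x hx => by simpa [hy] using ha_nonneg x hx
  rcases hx₀.1.eq_or_lt with rfl | hA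
  · have hu'A : u' A ≤ 0 := hmax.localize.hasDerivWithinAt_Icc_nonpos (hu A hx₀) le_rfl hAB
    have ha'A : 0 ≤ a' := by
      simpa using (hneg_a_max A haA).localize.hasDerivWithinAt_Icc_nonpos ha.neg le_rfl hAB
    simpa [haA] using mul_nonpos_of_nonneg_of_nonpos ha'A hu'A
  rcases hx₀.2.eq_or_lt with rfl | hB
  · have hu'B : 0 ≤ u' x₀ := hmax.localize.hasDerivWithinAt_Icc_nonneg (hu x₀ hx₀) hAB le_rfl
    have ha'B : a' ≤ 0 := by
      simpa using (hneg_a_max x₀ haB).localize.hasDerivWithinAt_Icc_nonneg ha.neg hAB le_rfl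
    simpa [haB] using mul_nonpos_of_nonpos_of_nonneg ha'B hu'B
  have hnhds : Icc A B ∈ 𝓝 x₀ := Icc_mem_nhds hA hB
  have hu'0 : u' x₀ = 0 :=
    (hmax.isLocalMax hnhds).hasDerivAt_eq_zero ((hu x₀ hx₀).hasDerivAt hnhds)
  have hu''_nonpos : u'' ≤ 0 :=
    (hmax.isLocalMax hnhds).hasDerivAt_deriv_nonpos_s8
      (eventually_of_mem (Ioo_mem_nhds hA hB) fun x hx =>
        (hu x (Ioo_subset_Icc_self hx)).hasDerivAt (Icc_mem_nhds hx.1 hx.2))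
      (hu'.hasDerivAt hnhds)
  simpa [hu'0] using mul_nonpos_of_nonneg_of_nonpos (ha_nonneg x₀ hx₀) hu''_nonpos

structure IsClassicalBackwardSolution (l T : ℝ) (a a' q : ℝ → ℝ) (v vt vx vxx : ℝ → ℝ → ℝ) :
    Prop where
  continuousOn : ContinuousOn (fun p : ℝ × ℝ => v p.1 p.2) (Icc 0 l ×ˢ Icc 0 T)
  hasDerivWithinAt_t : ∀ x ∈ Icc 0 l, ∀ t ∈ Ico 0 T,
    HasDerivWithinAt (fun τ => v x τ) (vt x t) (Icc 0 T) t
  hasDerivWithinAt_x : ∀ x ∈ Icc 0 l, ∀ t ∈ Ico 0 T,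
    HasDerivWithinAt (fun s => v s t) (vx x t) (Icc 0 l) x
  hasDerivWithinAt_xx : ∀ x ∈ Icc 0 l, ∀ t ∈ Ico 0 T,
    HasDerivWithinAt (fun s => vx s t) (vxx x t) (Icc 0 l) x
  equation : ∀ x ∈ Icc 0 l, ∀ t ∈ Ico 0 T,
    -vt x t - (a x * vxx x t + a' x * vx x t) + q x * v x t = 0

namespace IsClassicalBackwardSolution

variable {l T : ℝ} {a a' q : ℝ → ℝ} {v vt vx vxx : ℝ → ℝ → ℝ}

theorem neg (h : IsClassicalBackwardSolution l T a a' q v vt vx vxx) :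
    IsClassicalBackwardSolution l T a a' q (fun x t => -v x t) (fun x t => -vt x t)
      (fun x t => -vx x t) (fun x t => -vxx x t) where
  continuousOn := h.continuousOn.neg
  hasDerivWithinAt_t x hx t ht := (h.hasDerivWithinAt_t x hx t ht).neg
  hasDerivWithinAt_x x hx t ht := (h.hasDerivWithinAt_x x hx t ht).neg
  hasDerivWithinAt_xx x hx t ht := (h.hasDerivWithinAt_xx x hx t ht).neg
  equation x hx t ht := by linear_combination -h.equation x hx t ht

theorem le_of_terminal_le (h : IsClassicalBackwardSolution l T a a' q v vt vx vxx) (hl : 0 < l)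
    (ha : ∀ x ∈ Icc 0 l, HasDerivWithinAt a (a' x) (Icc 0 l) x) (ha0 : a 0 = 0) (hal : a l = 0)
    (ha_nonneg : ∀ x ∈ Icc 0 l, 0 ≤ a x) (hq_pos : ∀ x ∈ Icc 0 l, 0 < q x) {M : ℝ}
    (hM : 0 ≤ M) (hterm : ∀ x ∈ Icc 0 l, v x T ≤ M) :
    ∀ x ∈ Icc 0 l, ∀ t ∈ Icc 0 T, v x t ≤ M := by
  intro x hx t ht
  obtain ⟨⟨x₀, t₀⟩, ⟨hx₀, ht₀⟩, hmax⟩ :=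
    (isCompact_Icc.prod isCompact_Icc).exists_isMaxOn ⟨(x, t), hx, ht⟩ h.continuousOn
  refine (hmax (mk_mem_prod hx ht)).trans ?_
  by_contra! hgt
  have ht₀T : t₀ < T :=
    ht₀.2.lt_of_ne (by rintro rfl; exact (hterm x₀ hx₀).not_gt hgt)
  have ht₀' : t₀ ∈ Ico 0 T := ⟨ht₀.1, ht₀T⟩
  have hmax_t : IsMaxOn (fun τ => v x₀ τ) (Icc 0 T) t₀ := fun τ hτ => hmax (mk_mem_prod hx₀ hτ)
  have hmax_x : IsMaxOn (fun s => v s t₀) (Icc 0 l) x₀ := fun s hs => hmax (mk_mem_prod hs ht₀)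
  have htime : vt x₀ t₀ ≤ 0 :=
    hmax_t.localize.hasDerivWithinAt_Icc_nonpos (h.hasDerivWithinAt_t x₀ hx₀ t₀ ht₀') ht₀.1 ht₀T
  have hspace : a x₀ * vxx x₀ t₀ + a' x₀ * vx x₀ t₀ ≤ 0 :=
    hmax_x.flux_deriv_nonpos hx₀ hl (ha x₀ hx₀) ha0 hal ha_nonneg
      (fun s hs => h.hasDerivWithinAt_x s hs t₀ ht₀') (h.hasDerivWithinAt_xx x₀ hx₀ t₀ ht₀')
  linarith [h.equation x₀ hx₀ t₀ ht₀', mul_pos (hq_pos x₀ hx₀) (hM.trans_lt hgt)]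

theorem abs_le_of_terminal_abs_le (h : IsClassicalBackwardSolution l T a a' q v vt vx vxx)
    (hl : 0 < l) (ha : ∀ x ∈ Icc 0 l, HasDerivWithinAt a (a' x) (Icc 0 l) x) (ha0 : a 0 = 0)
    (hal : a l = 0) (ha_nonneg : ∀ x ∈ Icc 0 l, 0 ≤ a x) (hq_pos : ∀ x ∈ Icc 0 l, 0 < q x)
    {M : ℝ} (hM : 0 ≤ M) (hterm : ∀ x ∈ Icc 0 l, |v x T| ≤ M) :
    ∀ x ∈ Icc 0 l, ∀ t ∈ Icc 0 T, |v x t| ≤ M := fun x hx t ht =>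
  abs_le.2
    ⟨neg_le.1 <| h.neg.le_of_terminal_le hl ha ha0 hal ha_nonneg hq_pos hM
        (fun y hy => neg_le.1 (abs_le.1 (hterm y hy)).1) x hx t ht,
      h.le_of_terminal_le hl ha ha0 hal ha_nonneg hq_pos hM
        (fun y hy => (abs_le.1 (hterm y hy)).2) x hx t ht⟩

end IsClassicalBackwardSolution

theorem backward_sup_norm_estimate_general
    (l T q₀ : ℝ) (hl : 0 < l) (hq₀ : 0 < q₀)
    (a a' q : ℝ → ℝ)
    (ha : ∀ x ∈ Icc (0:ℝ) l, HasDerivWithinAt a (a' x) (Icc (0:ℝ) l) x)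
    (ha0 : a 0 = 0) (hal : a l = 0)
    (hapos : ∀ x ∈ Ioo (0:ℝ) l, 0 < a x)
    (hq : ∀ x ∈ Icc (0:ℝ) l, q₀ ≤ q x)
    (ψ : ℝ → ℝ)
    (hψb : ∃ M, ∀ x ∈ Icc (0:ℝ) l, |ψ x| ≤ M)
    (v vt vx vxx : ℝ → ℝ → ℝ)
    (hv : ContinuousOn (fun p : ℝ × ℝ => v p.1 p.2) (Icc (0:ℝ) l ×ˢ Icc (0:ℝ) T))
    (hvt : ∀ x ∈ Icc (0:ℝ) l, ∀ t ∈ Ico (0:ℝ) T,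
      HasDerivWithinAt (fun τ => v x τ) (vt x t) (Icc (0:ℝ) T) t)
    (hvx : ∀ x ∈ Icc (0:ℝ) l, ∀ t ∈ Ico (0:ℝ) T,
      HasDerivWithinAt (fun s => v s t) (vx x t) (Icc (0:ℝ) l) x)
    (hvxx : ∀ x ∈ Icc (0:ℝ) l, ∀ t ∈ Ico (0:ℝ) T,
      HasDerivWithinAt (fun s => vx s t) (vxx x t) (Icc (0:ℝ) l) x)
    (hL : ∀ x ∈ Icc (0:ℝ) l, ∀ t ∈ Ico (0:ℝ) T,
      -vt x t - (a x * vxx x t + a' x * vx x t) + q x * v x t = 0)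
    (hfinal : ∀ x ∈ Icc (0:ℝ) l, v x T = ψ x) :
    ∀ x ∈ Icc (0:ℝ) l, ∀ t ∈ Icc (0:ℝ) T,
      |v x t| ≤ sSup ((fun x => |ψ x|) '' Icc (0:ℝ) l) := by
  intro x hx t ht
  obtain ⟨C, hC⟩ := hψb
  have hψ_le : ∀ y ∈ Icc (0:ℝ) l, |ψ y| ≤ sSup ((fun x => |ψ x|) '' Icc (0:ℝ) l) :=
    fun y hy => le_csSup ⟨C, forall_mem_image.2 hC⟩ (mem_image_of_mem _ hy)
  have ha_nonneg : ∀ y ∈ Icc (0:ℝ) l, 0 ≤ a y := by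
    rintro y ⟨hy0, hyl⟩
    rcases hy0.eq_or_lt with rfl | hy0
    · exact ha0.ge
    rcases hyl.eq_or_lt with rfl | hyl
    · exact hal.ge
    exact (hapos y ⟨hy0, hyl⟩).le
  exact IsClassicalBackwardSolution.abs_le_of_terminal_abs_le ⟨hv, hvt, hvx, hvxx, hL⟩ hl ha
    ha0 hal ha_nonneg (fun y hy => hq₀.trans_le (hq y hy)) ((abs_nonneg _).trans (hψ_le x hx))
    (fun y hy => hfinal y hy ▸ hψ_le y hy) x hx t ht

/-- Backward sup-norm estimate (Lemma 5.3, classical form): a classical solution `v` of the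
backward equation `−v_t − (a v_x)_x + q v = 0` on `[0,l] × [0,T)` with terminal value
`v(·,T) = ψ` satisfies `max_{Q̄} |v| ≤ sup_{[0,l]} |ψ|`. -/
theorem backward_sup_norm_estimate
    (l T q₀ : ℝ) (hl : 0 < l) (hT : 0 < T) (hq₀ : 0 < q₀)
    (a a' q : ℝ → ℝ)
    (ha : ∀ x ∈ Icc (0:ℝ) l, HasDerivWithinAt a (a' x) (Icc (0:ℝ) l) x)
    (ha'c : ContinuousOn a' (Icc (0:ℝ) l))
    (ha0 : a 0 = 0) (hal : a l = 0)
    (hapos : ∀ x ∈ Ioo (0:ℝ) l, 0 < a x)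
    (hqc : ContinuousOn q (Icc (0:ℝ) l))
    (hq : ∀ x ∈ Icc (0:ℝ) l, q₀ ≤ q x)
    (ψ : ℝ → ℝ)
    (hψb : ∃ M, ∀ x ∈ Icc (0:ℝ) l, |ψ x| ≤ M)
    (v vt vx vxx : ℝ → ℝ → ℝ)
    (hv : ContinuousOn (fun p : ℝ × ℝ => v p.1 p.2) (Icc (0:ℝ) l ×ˢ Icc (0:ℝ) T))
    (hvt : ∀ x ∈ Icc (0:ℝ) l, ∀ t ∈ Ico (0:ℝ) T,
      HasDerivWithinAt (fun τ => v x τ) (vt x t) (Icc (0:ℝ) T) t)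
    (hvx : ∀ x ∈ Icc (0:ℝ) l, ∀ t ∈ Ico (0:ℝ) T,
      HasDerivWithinAt (fun s => v s t) (vx x t) (Icc (0:ℝ) l) x)
    (hvxx : ∀ x ∈ Icc (0:ℝ) l, ∀ t ∈ Ico (0:ℝ) T,
      HasDerivWithinAt (fun s => vx s t) (vxx x t) (Icc (0:ℝ) l) x)
    (hL : ∀ x ∈ Icc (0:ℝ) l, ∀ t ∈ Ico (0:ℝ) T,
      -vt x t - (a x * vxx x t + a' x * vx x t) + q x * v x t = 0)
    (hfinal : ∀ x ∈ Icc (0:ℝ) l, v x T = ψ x) :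
    ∀ x ∈ Icc (0:ℝ) l, ∀ t ∈ Icc (0:ℝ) T,
      |v x t| ≤ sSup ((fun x => |ψ x|) '' Icc (0:ℝ) l) :=
  backward_sup_norm_estimate_general l T q₀ hl hq₀ a a' q ha ha0 hal hapos hq ψ hψb v vt vx vxx hv
    hvt hvx hvxx hL hfinal
end

section
/- Energy estimate for the regularized non-degenerate problem (estimate in proof of Theorem 3.1): Let ε ∈ (0,1) and a_ε(x) = a(x) + ε. Let q : [0,l] → ℝ be continuous with q ≥ 0, f : Q̄ → ℝ continuous, and φ : [0,l] → ℝ continuous with φ(0) = φ(l) = 0. Let u be continuous on Q̄ = [0,l] × [0,T] with u_t, u_x, u_{xx} continuous on Q̄, satisfying u_t − (a_ε(x)u_x)_x + q(x)u = f(x,t) on Q̄, u(0,t) = u(l,t) = 0 for t ∈ [0,T], and u(x,0) = φ(x) for x ∈ [0,l]. Then there is a constant C > 0 depending only on T (in particular independent of ε, f, φ, u) such that max_{0≤t≤T} ∫₀^l u(x,t)² dx + ∫₀^T∫₀^l a_ε(x) u_x(x,t)² dx dt ≤ C ( ∫₀^l φ(x)² dx + ∫₀^T∫₀^l f(x,t)²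 dx dt ). -/
/-!
Multiply the equation by `2u` and integrate in `x`: the flux term integrates by parts against the
Dirichlet condition to `-2 ∫ a_ε u_x²`, the term `q u²` has a sign, and `2uf ≤ u² + f²`.
Integrating in time, the energy `E(t) = ∫ u²`, the dissipation `D(t) = ∫ a_ε u_x²` and
`F(t) = ∫ f²` satisfy `E(t) + 2 ∫₀ᵗ D ≤ E(0) + ∫₀ᵗ E + ∫₀ᵗ F`. Since `D ≥ 0`, Grönwall gives
`E ≤ e^T (E(0) + ∫₀^T F)`, and feeding this back bounds `∫₀^T D`. Neither `ε` nor the size of `a`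
enters the constant, only `a_ε ≥ 0`.
-/

open Set MeasureTheory Function
open scoped Interval

section Rectangle

variable {E : Type*} [NormedAddCommGroup E] [NormedSpace ℝ E] {a b c d : ℝ} {G : ℝ → ℝ → E}

theorem continuousOn_parametric_intervalIntegral_of_continuousOn (hab : a ≤ b) (hcd : c ≤ d)
    (hG : ContinuousOn (uncurry G) (Icc a b ×ˢ Icc c d)) :
    ContinuousOn (fun t => ∫ x in a..b, G x t) (Icc c d) := by
  -- clamping both coordinates extends `G` continuously to the whole plane
  set G' : ℝ → ℝ → E := fun t x => G (projIcc a b hab x) (projIcc c d hcd t)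
  have hG' : Continuous (uncurry G') :=
    hG.comp_continuous
      (f := fun p : ℝ × ℝ => ((projIcc a b hab p.2 : ℝ), (projIcc c d hcd p.1 : ℝ)))
      (by fun_prop) fun p => ⟨Subtype.prop _, Subtype.prop _⟩
  refine (intervalIntegral.continuous_parametric_intervalIntegral_of_continuous' hG' a b
    ).continuousOn.congr fun t ht => intervalIntegral.integral_congr fun x hx => ?_
  rw [uIcc_of_le hab] at hx
  simp [G', projIcc_of_mem _ hx, projIcc_of_mem _ ht]

theorem intervalIntegral_intervalIntegral_swap_of_continuousOn (hab : a ≤ b) (hcd : c ≤ d)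
    (hG : ContinuousOn (uncurry G) (Icc a b ×ˢ Icc c d)) :
    ∫ x in a..b, ∫ y in c..d, G x y = ∫ y in c..d, ∫ x in a..b, G x y := by
  refine intervalIntegral_intervalIntegral_swap ?_
  rw [uIoc_of_le hab, uIoc_of_le hcd]
  exact (hG.integrableOn_compact (isCompact_Icc.prod isCompact_Icc)).mono_set
    (prod_mono Ioc_subset_Icc_self Ioc_subset_Icc_self)

end Rectangle

theorem integral_two_mul_mul_deriv_eq_sq_sub_sq {v v' : ℝ → ℝ} {a b : ℝ}
    (hv : ∀ x ∈ [[a, b]], HasDerivWithinAt v (v' x) [[a, b]] x)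
    (hv' : IntervalIntegrable v' volume a b) :
    ∫ x in a..b, 2 * v x * v' x = v b ^ 2 - v a ^ 2 := by
  calc ∫ x in a..b, 2 * v x * v' x = ∫ x in a..b, v' x * v x + v x * v' x :=
        intervalIntegral.integral_congr fun x _ => by ring
    _ = v b ^ 2 - v a ^ 2 := by
        rw [intervalIntegral.integral_deriv_mul_eq_sub_of_hasDerivWithinAt hv hv hv' hv']
        ring

theorem le_mul_exp_of_le_add_mul_integral {E : ℝ → ℝ} {A K T : ℝ} (hK : 0 ≤ K)
    (hE : ContinuousOn E (Icc 0 T))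
    (hle : ∀ t ∈ Icc 0 T, E t ≤ A + K * ∫ s in (0:ℝ)..t, E s) :
    ∀ t ∈ Icc 0 T, E t ≤ A * Real.exp (K * t) := by
  intro t ht
  set g : ℝ → ℝ := fun τ => A + K * ∫ s in (0:ℝ)..τ, E s
  have hgc : ContinuousOn g (Icc 0 T) := by
    have hT : 0 ≤ T := ht.1.trans ht.2
    have := intervalIntegral.continuousOn_primitive_interval (a := 0) (b := T) (μ := volume)
      (by rw [uIcc_of_le hT]; exact hE.integrableOn_compact isCompact_Icc)
    rw [uIcc_of_le hT] at this
    exact (this.const_smul K).const_add A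
  have hgd : ∀ τ ∈ Ico 0 T, HasDerivWithinAt g (K * E τ) (Ici τ) τ := by
    intro τ hτ
    have hnhds : Icc 0 T ∈ nhdsWithin τ (Ioi τ) := Icc_mem_nhdsGT_of_mem hτ
    exact ((intervalIntegral.integral_hasDerivWithinAt_right
      ((hE.mono (Icc_subset_Icc_right hτ.2.le)).intervalIntegrable_of_Icc hτ.1)
      ⟨_, hnhds, hE.aestronglyMeasurable measurableSet_Icc⟩
      ((hE τ (Ico_subset_Icc_self hτ)).mono_of_mem_nhdsWithin hnhds)).const_mul K).const_add A
  have hg := le_gronwallBound_of_liminf_deriv_right_le (K := K) (ε := 0) hgc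
    (fun τ hτ _ hr => (hgd τ hτ).liminf_right_slope_le hr) (by simp [g] : g 0 ≤ A)
    (fun τ hτ => by simpa [g] using mul_le_mul_of_nonneg_left (hle τ (Ico_subset_Icc_self hτ)) hK)
  simpa [gronwallBound_ε0] using (hle t ht).trans (hg t ht)

theorem integral_two_mul_mul_add_two_mul_integral_le {l : ℝ} (hl : 0 ≤ l)
    {w w' w'' k k' q g h : ℝ → ℝ}
    (hw : ∀ x ∈ Icc 0 l, HasDerivWithinAt w (w' x) (Icc 0 l) x)
    (hw' : ∀ x ∈ Icc 0 l, HasDerivWithinAt w' (w'' x) (Icc 0 l) x)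
    (hk : ∀ x ∈ Icc 0 l, HasDerivWithinAt k (k' x) (Icc 0 l) x)
    (hw''c : ContinuousOn w'' (Icc 0 l)) (hk'c : ContinuousOn k' (Icc 0 l))
    (hgc : ContinuousOn g (Icc 0 l)) (hhc : ContinuousOn h (Icc 0 l))
    (hq : ∀ x ∈ Icc 0 l, 0 ≤ q x)
    (heq : ∀ x ∈ Icc 0 l, g x - (k x * w'' x + k' x * w' x) + q x * w x = h x)
    (hw0 : w 0 = 0) (hwl : w l = 0) :
    (∫ x in 0..l, 2 * w x * g x) + 2 * ∫ x in 0..l, k x * w' x ^ 2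
      ≤ (∫ x in 0..l, w x ^ 2) + ∫ x in 0..l, h x ^ 2 := by
  have hI : [[0, l]] = Icc 0 l := uIcc_of_le hl
  have hwc : ContinuousOn w (Icc 0 l) := fun x hx => (hw x hx).continuousWithinAt
  have hw'c : ContinuousOn w' (Icc 0 l) := fun x hx => (hw' x hx).continuousWithinAt
  have hkc : ContinuousOn k (Icc 0 l) := fun x hx => (hk x hx).continuousWithinAt
  have hint {F : ℝ → ℝ} (hF : ContinuousOn F (Icc 0 l)) : IntervalIntegrable F volume 0 l :=
    hF.intervalIntegrable_of_Icc hl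
  have hflux'c : ContinuousOn (fun x => k' x * w' x + k x * w'' x) (Icc 0 l) :=
    (hk'c.mul hw'c).add (hkc.mul hw''c)
  have hibp : ∫ x in 0..l, 2 * w x * (k' x * w' x + k x * w'' x)
      = -(2 * ∫ x in 0..l, k x * w' x ^ 2) := by
    have hparts := intervalIntegral.integral_mul_deriv_eq_deriv_mul_of_hasDerivWithinAt
      (u := w) (v := fun y => k y * w' y) (by rwa [hI])
      (by rw [hI]; exact fun x hx => (hk x hx).mul (hw' x hx))
      (hint hw'c) (hint hflux'c)
    calc ∫ x in 0..l, 2 * w x * (k' x * w' x + k x * w'' x)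
        = 2 * ∫ x in 0..l, w x * (k' x * w' x + k x * w'' x) := by
          simp_rw [mul_assoc]; exact intervalIntegral.integral_const_mul _ _
      _ = -(2 * ∫ x in 0..l, w' x * (k x * w' x)) := by rw [hparts, hw0, hwl]; ring
      _ = -(2 * ∫ x in 0..l, k x * w' x ^ 2) := by
          congr 2; exact intervalIntegral.integral_congr fun x _ => by ring
  have hpt : ∀ x ∈ Icc 0 l, 2 * w x * g x
      ≤ 2 * w x * (k' x * w' x + k x * w'' x) + (w x ^ 2 + h x ^ 2) := fun x hx => by
    linear_combination (2 * w x) * heq x hx + sq_nonneg (w x - h x)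
      + 2 * mul_nonneg (hq x hx) (sq_nonneg (w x))
  have hsq : IntervalIntegrable (fun x => w x ^ 2) volume 0 l := hint (by fun_prop)
  have hh : IntervalIntegrable (fun x => h x ^ 2) volume 0 l := hint (by fun_prop)
  have hdiss : IntervalIntegrable (fun x => 2 * w x * (k' x * w' x + k x * w'' x)) volume 0 l :=
    hint (by fun_prop)
  have hmono := intervalIntegral.integral_mono_on hl (hint (by fun_prop))
    (hdiss.add (hsq.add hh)) hpt
  rw [intervalIntegral.integral_add hdiss (hsq.add hh), intervalIntegral.integral_add hsq hh,
    hibp] at hmono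
  linarith

section HeatEquation

variable {l T : ℝ} {k k' q : ℝ → ℝ} {u ut ux uxx f : ℝ → ℝ → ℝ}

theorem integral_sq_eq_add_integral_integral_two_mul_deriv (hl : 0 ≤ l)
    (huc : ContinuousOn (uncurry u) (Icc 0 l ×ˢ Icc 0 T))
    (hutc : ContinuousOn (uncurry ut) (Icc 0 l ×ˢ Icc 0 T))
    (hdu : ∀ x ∈ Icc 0 l, ∀ t ∈ Icc 0 T, HasDerivWithinAt (u x ·) (ut x t) (Icc 0 T) t)
    {τ : ℝ} (hτ : τ ∈ Icc 0 T) :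
    ∫ x in 0..l, u x τ ^ 2
      = (∫ x in 0..l, u x 0 ^ 2) + ∫ s in 0..τ, ∫ x in 0..l, 2 * u x s * ut x s := by
  have hτT : Icc 0 τ ⊆ Icc 0 T := Icc_subset_Icc_right hτ.2
  have hI : [[0, τ]] = Icc 0 τ := uIcc_of_le hτ.1
  have hslice : ∀ x ∈ Icc 0 l, ∫ s in 0..τ, 2 * u x s * ut x s = u x τ ^ 2 - u x 0 ^ 2 :=
    fun x hx => integral_two_mul_mul_deriv_eq_sq_sub_sq
      (by rw [hI]; exact fun s hs => (hdu x hx s (hτT hs)).mono hτT)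
      (((hutc.uncurry_left x hx).mono hτT).intervalIntegrable_of_Icc hτ.1)
  have hsq (t : ℝ) (ht : t ∈ Icc 0 T) : IntervalIntegrable (fun x => u x t ^ 2) volume 0 l :=
    ((huc.uncurry_right t ht).pow 2).intervalIntegrable_of_Icc hl
  have hprod : ContinuousOn (uncurry fun x s => 2 * u x s * ut x s) (Icc 0 l ×ˢ Icc 0 τ) :=
    ((continuousOn_const.mul huc).mul hutc).mono (prod_mono subset_rfl hτT)
  rw [← intervalIntegral_intervalIntegral_swap_of_continuousOn hl hτ.1 hprod,
    intervalIntegral.integral_congr (fun x hx => hslice x (by rwa [uIcc_of_le hl] at hx)),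
    intervalIntegral.integral_sub (hsq τ hτ) (hsq 0 (left_mem_Icc.2 (hτ.1.trans hτ.2)))]
  ring

theorem integral_sq_add_two_mul_integral_integral_le (hl : 0 ≤ l)
    (hk : ∀ x ∈ Icc 0 l, HasDerivWithinAt k (k' x) (Icc 0 l) x) (hk'c : ContinuousOn k' (Icc 0 l))
    (hq : ∀ x ∈ Icc 0 l, 0 ≤ q x)
    (hfc : ContinuousOn (uncurry f) (Icc 0 l ×ˢ Icc 0 T))
    (huc : ContinuousOn (uncurry u) (Icc 0 l ×ˢ Icc 0 T))
    (hutc : ContinuousOn (uncurry ut) (Icc 0 l ×ˢ Icc 0 T))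
    (huxc : ContinuousOn (uncurry ux) (Icc 0 l ×ˢ Icc 0 T))
    (huxxc : ContinuousOn (uncurry uxx) (Icc 0 l ×ˢ Icc 0 T))
    (hdu : ∀ x ∈ Icc 0 l, ∀ t ∈ Icc 0 T, HasDerivWithinAt (u x ·) (ut x t) (Icc 0 T) t)
    (hdx : ∀ x ∈ Icc 0 l, ∀ t ∈ Icc 0 T, HasDerivWithinAt (u · t) (ux x t) (Icc 0 l) x)
    (hdxx : ∀ x ∈ Icc 0 l, ∀ t ∈ Icc 0 T, HasDerivWithinAt (ux · t) (uxx x t) (Icc 0 l) x)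
    (hpde : ∀ x ∈ Icc 0 l, ∀ t ∈ Icc 0 T,
      ut x t - (k x * uxx x t + k' x * ux x t) + q x * u x t = f x t)
    (hbc : ∀ t ∈ Icc 0 T, u 0 t = 0 ∧ u l t = 0) {τ : ℝ} (hτ : τ ∈ Icc 0 T) :
    (∫ x in 0..l, u x τ ^ 2) + 2 * ∫ s in 0..τ, ∫ x in 0..l, k x * ux x s ^ 2
      ≤ (∫ x in 0..l, u x 0 ^ 2) + (∫ s in 0..τ, ∫ x in 0..l, u x s ^ 2)
        + ∫ s in 0..τ, ∫ x in 0..l, f x s ^ 2 := by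
  have hτT : Icc 0 τ ⊆ Icc 0 T := Icc_subset_Icc_right hτ.2
  have hkc : ContinuousOn k (Icc 0 l) := fun x hx => (hk x hx).continuousWithinAt
  have hint {G : ℝ → ℝ → ℝ} (hG : ContinuousOn (uncurry G) (Icc 0 l ×ˢ Icc 0 T)) :
      IntervalIntegrable (fun s => ∫ x in 0..l, G x s) volume 0 τ :=
    ((continuousOn_parametric_intervalIntegral_of_continuousOn hl (hτ.1.trans hτ.2) hG).mono
      hτT).intervalIntegrable_of_Icc hτ.1
  have hH : IntervalIntegrable (fun s => ∫ x in 0..l, 2 * u x s * ut x s) volume 0 τ :=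
    hint ((continuousOn_const.mul huc).mul hutc)
  have hD : IntervalIntegrable (fun s => ∫ x in 0..l, k x * ux x s ^ 2) volume 0 τ :=
    hint ((hkc.comp continuousOn_fst fun _ hp => hp.1).mul (huxc.pow 2))
  have hE : IntervalIntegrable (fun s => ∫ x in 0..l, u x s ^ 2) volume 0 τ := hint (huc.pow 2)
  have hF : IntervalIntegrable (fun s => ∫ x in 0..l, f x s ^ 2) volume 0 τ := hint (hfc.pow 2)
  have hslice : ∀ s ∈ Icc 0 τ, (∫ x in 0..l, 2 * u x s * ut x s)
      ≤ (∫ x in 0..l, u x s ^ 2) + (∫ x in 0..l, f x s ^ 2)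
        - 2 * ∫ x in 0..l, k x * ux x s ^ 2 := fun s hs => by
    have hs := hτT hs
    have := integral_two_mul_mul_add_two_mul_integral_le hl (fun x hx => hdx x hx s hs)
      (fun x hx => hdxx x hx s hs) hk (huxxc.uncurry_right s hs) hk'c
      (hutc.uncurry_right s hs) (hfc.uncurry_right s hs) hq (fun x hx => hpde x hx s hs)
      (hbc s hs).1 (hbc s hs).2
    linarith
  have hmono := intervalIntegral.integral_mono_on hτ.1 hH ((hE.add hF).sub (hD.const_mul 2)) hslice
  rw [intervalIntegral.integral_sub (hE.add hF) (hD.const_mul 2),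
    intervalIntegral.integral_add hE hF, intervalIntegral.integral_const_mul] at hmono
  have := integral_sq_eq_add_integral_integral_two_mul_deriv hl huc hutc hdu hτ
  linarith

end HeatEquation

theorem add_integral_le_of_le_add_integral {E D F : ℝ → ℝ} {T t : ℝ} (ht : t ∈ Icc 0 T)
    (hE : ContinuousOn E (Icc 0 T)) (hF : IntervalIntegrable F volume 0 T)
    (hE0 : ∀ s ∈ Icc 0 T, 0 ≤ E s) (hD0 : ∀ s ∈ Icc 0 T, 0 ≤ D s) (hF0 : ∀ s ∈ Icc 0 T, 0 ≤ F s)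
    (hle : ∀ τ ∈ Icc 0 T,
      E τ + 2 * ∫ s in 0..τ, D s ≤ E 0 + (∫ s in 0..τ, E s) + ∫ s in 0..τ, F s) :
    E t + ∫ s in 0..T, D s ≤ ((1 + T) * Real.exp T + 1) * (E 0 + ∫ s in 0..T, F s) := by
  have hT : 0 ≤ T := ht.1.trans ht.2
  set A := E 0 + ∫ s in 0..T, F s
  have hA : 0 ≤ A :=
    add_nonneg (hE0 0 (left_mem_Icc.2 hT)) (intervalIntegral.integral_nonneg hT hF0)
  have hDint (τ : ℝ) (hτ : τ ∈ Icc 0 T) : 0 ≤ ∫ s in 0..τ, D s :=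
    intervalIntegral.integral_nonneg hτ.1 fun s hs => hD0 s ⟨hs.1, hs.2.trans hτ.2⟩
  have hgron := le_mul_exp_of_le_add_mul_integral (A := A) zero_le_one hE fun τ hτ => by
    have := hle τ hτ
    have := intervalIntegral.integral_mono_interval le_rfl hτ.1 hτ.2
      (ae_restrict_of_forall_mem measurableSet_Ioc fun s hs => hF0 s (Ioc_subset_Icc_self hs)) hF
    linarith [hDint τ hτ]
  have hEexp : ∀ τ ∈ Icc 0 T, E τ ≤ A * Real.exp T := fun τ hτ =>
    (hgron τ hτ).trans (by gcongr; linarith [hτ.2])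
  have hEint : ∫ s in 0..T, E s ≤ A * (T * Real.exp T) := by
    simpa using intervalIntegral.integral_mono_on hT (hE.intervalIntegrable_of_Icc (μ := volume) hT)
      intervalIntegrable_const hEexp
  have hleT := hle T (right_mem_Icc.2 hT)
  have hEt := hEexp t ht
  have hET := hE0 T (right_mem_Icc.2 hT)
  nlinarith [mul_nonneg hT (mul_nonneg hA (Real.exp_pos T).le), hDint T (right_mem_Icc.2 hT)]

/-- Energy estimate for the regularized non-degenerate problem (proof of Theorem 3.1):
there is a constant `C > 0` depending only on `T` (independent of `ε`, `f`, `φ`, `q`, `u`)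
such that any classical solution of the regularized initial-boundary value problem satisfies
`max_{0≤t≤T} ∫₀^l u² dx + ∫₀^T∫₀^l a_ε uₓ² dx dt ≤ C (∫₀^l φ² dx + ∫₀^T∫₀^l f² dx dt)`. -/
theorem regularized_energy_estimate
    (l T : ℝ) (hl : 0 < l) (hT : 0 < T)
    (a a' : ℝ → ℝ)
    (ha : ∀ x ∈ Icc (0:ℝ) l, HasDerivWithinAt a (a' x) (Icc (0:ℝ) l) x)
    (ha'c : ContinuousOn a' (Icc (0:ℝ) l))
    (ha0 : a 0 = 0) (hal : a l = 0)
    (hapos : ∀ x ∈ Ioo (0:ℝ) l, 0 < a x) :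
    ∃ C > 0, ∀ ε ∈ Ioo (0:ℝ) 1, ∀ (q : ℝ → ℝ) (f : ℝ → ℝ → ℝ) (φ : ℝ → ℝ)
      (u ut ux uxx : ℝ → ℝ → ℝ),
      ContinuousOn q (Icc (0:ℝ) l) → (∀ x ∈ Icc (0:ℝ) l, 0 ≤ q x) →
      ContinuousOn (fun p : ℝ × ℝ => f p.1 p.2) (Icc (0:ℝ) l ×ˢ Icc (0:ℝ) T) →
      ContinuousOn φ (Icc (0:ℝ) l) → φ 0 = 0 → φ l = 0 →
      ContinuousOn (fun p : ℝ × ℝ => u p.1 p.2) (Icc (0:ℝ) l ×ˢ Icc (0:ℝ) T) →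
      ContinuousOn (fun p : ℝ × ℝ => ut p.1 p.2) (Icc (0:ℝ) l ×ˢ Icc (0:ℝ) T) →
      ContinuousOn (fun p : ℝ × ℝ => ux p.1 p.2) (Icc (0:ℝ) l ×ˢ Icc (0:ℝ) T) →
      ContinuousOn (fun p : ℝ × ℝ => uxx p.1 p.2) (Icc (0:ℝ) l ×ˢ Icc (0:ℝ) T) →
      (∀ x ∈ Icc (0:ℝ) l, ∀ t ∈ Icc (0:ℝ) T,
        HasDerivWithinAt (fun τ => u x τ) (ut x t) (Icc (0:ℝ) T) t) →
      (∀ x ∈ Icc (0:ℝ) l, ∀ t ∈ Icc (0:ℝ) T,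
        HasDerivWithinAt (fun s => u s t) (ux x t) (Icc (0:ℝ) l) x) →
      (∀ x ∈ Icc (0:ℝ) l, ∀ t ∈ Icc (0:ℝ) T,
        HasDerivWithinAt (fun s => ux s t) (uxx x t) (Icc (0:ℝ) l) x) →
      (∀ x ∈ Icc (0:ℝ) l, ∀ t ∈ Icc (0:ℝ) T,
        ut x t - ((a x + ε) * uxx x t + a' x * ux x t) + q x * u x t = f x t) →
      (∀ t ∈ Icc (0:ℝ) T, u 0 t = 0 ∧ u l t = 0) →
      (∀ x ∈ Icc (0:ℝ) l, u x 0 = φ x) →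
      ∀ t ∈ Icc (0:ℝ) T,
        (∫ x in (0:ℝ)..l, (u x t) ^ 2) +
          (∫ s in (0:ℝ)..T, ∫ x in (0:ℝ)..l, (a x + ε) * (ux x s) ^ 2)
        ≤ C * ((∫ x in (0:ℝ)..l, (φ x) ^ 2) +
            ∫ s in (0:ℝ)..T, ∫ x in (0:ℝ)..l, (f x s) ^ 2) := by
  refine ⟨(1 + T) * Real.exp T + 1, by nlinarith [mul_pos hT (Real.exp_pos T), Real.exp_pos T], ?_⟩
  rintro ε ⟨hε, -⟩ q f φ u ut ux uxx - hq hfc - - - huc hutc huxc huxxc hdu hdx hdxx hpde hbc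
    hic t ht
  have ha_nonneg : ∀ x ∈ Icc (0:ℝ) l, 0 ≤ a x := fun x hx => by
    rcases hx.1.eq_or_lt with rfl | hx0
    · exact ha0.ge
    rcases hx.2.eq_or_lt with rfl | hxl
    · exact hal.ge
    exact (hapos x ⟨hx0, hxl⟩).le
  have hE : ContinuousOn (fun s => ∫ x in (0:ℝ)..l, u x s ^ 2) (Icc 0 T) :=
    continuousOn_parametric_intervalIntegral_of_continuousOn hl.le hT.le (huc.pow 2)
  have hF : ContinuousOn (fun s => ∫ x in (0:ℝ)..l, f x s ^ 2) (Icc 0 T) :=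
    continuousOn_parametric_intervalIntegral_of_continuousOn hl.le hT.le (hfc.pow 2)
  have hφ : ∫ x in (0:ℝ)..l, φ x ^ 2 = ∫ x in (0:ℝ)..l, u x 0 ^ 2 :=
    intervalIntegral.integral_congr fun x hx => by rw [hic x (by rwa [uIcc_of_le hl.le] at hx)]
  rw [hφ]
  exact add_integral_le_of_le_add_integral (D := fun s => ∫ x in (0:ℝ)..l, (a x + ε) * ux x s ^ 2)
    ht hE (hF.intervalIntegrable_of_Icc hT.le)
    (fun s _ => intervalIntegral.integral_nonneg hl.le fun x _ => sq_nonneg _)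
    (fun s _ => intervalIntegral.integral_nonneg hl.le fun x hx =>
      mul_nonneg (add_nonneg (ha_nonneg x hx) hε.le) (sq_nonneg _))
    (fun s _ => intervalIntegral.integral_nonneg hl.le fun x _ => sq_nonneg _)
    fun τ hτ => integral_sq_add_two_mul_integral_integral_le hl.le
      (fun x hx => (ha x hx).add_const ε) ha'c hq hfc huc hutc huxc huxxc hdu hdx hdxx hpde hbc hτ
end
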